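/- arXiv:1205.0449 — 5 statements merged into one kernel-verified Lean document; each statement's English description precedes it below -/
import Mathlib

section
/- Let A = k[t] be the polynomial ring in one variable over a field k, graded with deg(t) = 1. Every finitely generated graded torsion A-module is isomorphic to a finite direct sum of graded modules of the form A(-p)/(t^q) with p ∈ ℤ and q ≥ 1. -/
/-!
Since `M` is finitely generated and `t`-power torsion, some `t ^ n` kills it, so `M` is finite
dimensional over `k`. Let `t ^ (q + 1)` be the least power of `t` killing a nonzero homogeneous
submodule `N`, and pick a homogeneous `y ∈ N` with `t ^ q • y ≠ 0`; the annihilator of `y` is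
then `(t ^ (q + 1))`. A maximal homogeneous submodule `K ≤ N` with `A y ∩ K = 0` is a complement
of `A y` in `N`: otherwise a homogeneous `x ∈ N \ (A y ⊕ K)` with `t x ∈ A y ⊕ K` can be corrected
by an element of `A y` so that `t x ∈ K`, and then `K + A x` is a larger such submodule. Since
`K < N`, induction on `N` splits off one cyclic summand `A y ≅ A(-p)/(t ^ (q + 1))` at a time.
-/

open Polynomial DirectSum Submodule

section Homogeneous

variable {ι A M σ : Type*} [DecidableEq ι] [Semiring A] [AddCommMonoid M] [Module A M]
  [SetLike σ M] [AddSubmonoidClass σ M] (ℳ : ι → σ) [Decomposition ℳ]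

theorem Submodule.IsHomogeneous.sup {N₁ N₂ : Submodule A M} (h₁ : N₁.IsHomogeneous ℳ)
    (h₂ : N₂.IsHomogeneous ℳ) : (N₁ ⊔ N₂).IsHomogeneous ℳ := by
  intro i m hm
  obtain ⟨a, ha, b, hb, rfl⟩ := mem_sup.mp hm
  rw [decompose_add, DirectSum.add_apply, AddMemClass.coe_add]
  exact add_mem_sup (h₁ i ha) (h₂ i hb)

theorem Submodule.isHomogeneous_bot : (⊥ : Submodule A M).IsHomogeneous ℳ := by
  intro i m hm
  simp [(mem_bot A).mp hm]

theorem Submodule.isHomogeneous_top : (⊤ : Submodule A M).IsHomogeneous ℳ :=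
  fun _ _ _ => mem_top

theorem Submodule.decompose_mem_of_homogeneous_mem {N : Submodule A M} {x : M} {j : ι}
    (hx : x ∈ ℳ j) (hxN : x ∈ N) (i : ι) : (decompose ℳ x i : M) ∈ N := by
  by_cases hji : j = i
  · rwa [← hji, decompose_of_mem_same ℳ hx]
  · rw [decompose_of_mem_ne ℳ hx hji]
    exact zero_mem N

theorem Submodule.IsHomogeneous.exists_homogeneous_mem_notMem {N D : Submodule A M}
    (hN : N.IsHomogeneous ℳ) (hND : ¬N ≤ D) : ∃ i, ∃ x ∈ ℳ i, x ∈ N ∧ x ∉ D := by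
  classical
  contrapose! hND
  intro x hx
  rw [← sum_support_decompose ℳ x]
  exact D.sum_mem fun i _ => hND i _ (decompose ℳ x i).2 (hN i hx)

end Homogeneous

section Torsion

variable {R M : Type*} [CommRing R] [AddCommGroup M] [Module R M]

theorem exists_pow_smul_eq_zero_of_finite [Module.Finite R M] (a : R)
    (h : ∀ m : M, ∃ n : ℕ, a ^ n • m = 0) : ∃ n : ℕ, ∀ m : M, a ^ n • m = 0 := by
  classical
  obtain ⟨d, s, hs⟩ := Module.Finite.exists_fin (R := R) (M := M)
  -- prepending `0` makes the family of generators nonempty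
  have hs' : span R (Set.range (Fin.cons 0 s : Fin (d + 1) → M)) = ⊤ := by
    rw [Fin.range_cons, span_insert_zero, hs]
  obtain ⟨j, hj⟩ := Submodule.exists_isTorsionBy ((isTorsion'_powers_iff a).mpr h)
    (d + 1) d.succ_ne_zero _ hs'
  exact ⟨_, hj⟩

theorem Module.Finite.of_smul_eq_zero_of_monic [Module R[X] M] [IsScalarTower R R[X] M]
    [Module.Finite R[X] M] {g : R[X]} (hg : g.Monic) (hgM : ∀ m : M, g • m = 0) :
    Module.Finite R M := by
  let := ((Module.isTorsionBySet_span_singleton_iff g).mpr hgM).module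
  have : Module.Finite R (R[X] ⧸ Ideal.span {g}) := hg.finite_adjoinRoot
  have : Module.Finite (R[X] ⧸ Ideal.span {g}) M :=
    Module.Finite.of_restrictScalars_finite R[X] _ M
  exact Module.Finite.trans (R[X] ⧸ Ideal.span {g}) M

end Torsion

section PolynomialModule

variable {k M : Type*} [Field k] [AddCommGroup M] [Module k[X] M]

theorem smul_eq_zero_iff_X_pow_dvd {m : M} {q : ℕ} (h : (X : k[X]) ^ (q + 1) • m = 0)
    (h' : (X : k[X]) ^ q • m ≠ 0) (f : k[X]) : f • m = 0 ↔ X ^ (q + 1) ∣ f := by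
  obtain ⟨g, hg⟩ := (IsPrincipalIdealRing.principal (k[X] ∙ m).annihilator).principal
  have hmem : ∀ f : k[X], f • m = 0 ↔ g ∣ f := fun f => by
    rw [← mem_annihilator_span_singleton, hg, Ideal.submodule_span_eq, Ideal.mem_span_singleton]
  obtain ⟨e, he, hg⟩ := (dvd_prime_pow prime_X (q + 1)).mp ((hmem _).mp h)
  have hqe : q < e := by
    by_contra! hle
    exact h' ((hmem _).mpr (hg.dvd.trans (pow_dvd_pow X hle)))
  rw [hmem, hg.dvd_iff_dvd_left, show e = q + 1 by omega]

theorem disjoint_sup_span_singleton_of_X_smul_mem {Y K : Submodule k[X] M} {x : M}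
    (hYK : Disjoint Y K) (hx : x ∉ Y ⊔ K) (hXx : (X : k[X]) • x ∈ K) :
    Disjoint Y (K ⊔ k[X] ∙ x) := by
  rw [disjoint_def]
  intro w hwY hw
  obtain ⟨c, hc, _, hfx, rfl⟩ := mem_sup.mp hw
  obtain ⟨f, rfl⟩ := mem_span_singleton.mp hfx
  -- `f • x` is a constant multiple of `x` modulo `K`
  have hsplit : f • x = f.divX • (X : k[X]) • x + C (f.coeff 0) • x := by
    rw [← mul_smul, ← add_smul, divX_mul_X_add]
  by_cases h0 : f.coeff 0 = 0
  · refine disjoint_def.mp hYK _ hwY ?_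
    rw [hsplit, h0, map_zero, zero_smul, add_zero]
    exact add_mem hc (K.smul_mem _ hXx)
  · refine absurd ?_ hx
    rw [← smul_mem_iff_of_isUnit _ (isUnit_C.mpr (Ne.isUnit h0)),
      show C (f.coeff 0) • x = (c + f • x) - c - f.divX • (X : k[X]) • x by rw [hsplit]; abel]
    exact sub_mem (sub_mem (mem_sup_left hwY) (mem_sup_right hc))
      (mem_sup_right (K.smul_mem _ hXx))

variable [Module k M] (ℳ : ℤ → Submodule k M)

/-- `N` is the internal direct sum of the cyclic submodules `k[X] ∙ y ≅ A(-p)/(t ^ q)`,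
`y ∈ Y`. -/
def HasGradedCyclicDecomposition (N : Submodule k[X] M) : Prop :=
  ∃ Y : Finset M, (∀ y ∈ Y, ∃ (p : ℤ) (q : ℕ), 1 ≤ q ∧ y ∈ ℳ p ∧
      ∀ f : k[X], f • y = 0 ↔ f ∈ Ideal.span {(X : k[X]) ^ q}) ∧
    Y.SupIndep (fun y => k[X] ∙ y) ∧ Y.sup (fun y => k[X] ∙ y) = N

variable {ℳ}

theorem HasGradedCyclicDecomposition.exists_fin {N : Submodule k[X] M}
    (h : HasGradedCyclicDecomposition ℳ N) :
    ∃ (s : ℕ) (p : Fin s → ℤ) (q : Fin s → ℕ) (y : Fin s → M), (∀ t, 1 ≤ q t) ∧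
      (∀ t, y t ∈ ℳ (p t)) ∧
      (∀ t, ∀ f : k[X], f • y t = 0 ↔ f ∈ Ideal.span {(X : k[X]) ^ q t}) ∧
      iSupIndep (fun t => k[X] ∙ y t) ∧ (⨆ t, k[X] ∙ y t) = N := by
  obtain ⟨Y, hY, hind, hsup⟩ := h
  choose p q hq hy hann using hY
  let e := Y.equivFin.symm
  refine ⟨Y.card, fun t => p _ (e t).2, fun t => q _ (e t).2, fun t => e t, fun t => hq _ _,
    fun t => hy _ _, fun t => hann _ _, ?_, ?_⟩
  · exact (iSupIndep_comp_coe_iff_supIndep.mpr hind).comp e.injective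
  · rw [← hsup, Finset.sup_eq_iSup, iSup_subtype']
    exact e.iSup_comp (g := fun z : Y => k[X] ∙ (z : M))

variable (hX : ∀ i, ∀ m ∈ ℳ i, (X : k[X]) • m ∈ ℳ (i + 1))
include hX

theorem X_pow_smul_mem {m : M} {i : ℤ} (hm : m ∈ ℳ i) (n : ℕ) :
    (X : k[X]) ^ n • m ∈ ℳ (i + n) := by
  induction n with
  | zero => simpa using hm
  | succ n ih =>
    rw [pow_succ', mul_smul, Nat.cast_succ, ← add_assoc]
    exact hX _ _ ih

variable [Decomposition ℳ]

theorem decompose_X_smul (m : M) (i : ℤ) :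
    (decompose ℳ ((X : k[X]) • m) (i + 1) : M) = (X : k[X]) • (decompose ℳ m i : M) := by
  induction m using Decomposition.inductionOn ℳ with
  | zero => simp
  | @homogeneous j m =>
    by_cases hji : j = i
    · subst hji
      rw [decompose_of_mem_same ℳ (hX _ _ m.2), decompose_of_mem_same ℳ m.2]
    · rw [decompose_of_mem_ne ℳ (hX _ _ m.2) (by omega), decompose_of_mem_ne ℳ m.2 hji,
        smul_zero]
  | add m m' hm hm' =>
    rw [smul_add, decompose_add, decompose_add, DirectSum.add_apply, DirectSum.add_apply,
      AddMemClass.coe_add, AddMemClass.coe_add, hm, hm', smul_add]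

theorem exists_homogeneous_X_smul_mem {N D : Submodule k[X] M} (hN : N.IsHomogeneous ℳ)
    (hND : ¬N ≤ D) {n : ℕ} (hNn : ∀ m ∈ N, (X : k[X]) ^ n • m = 0) :
    ∃ d, ∃ x ∈ ℳ d, x ∈ N ∧ x ∉ D ∧ (X : k[X]) • x ∈ D := by
  obtain ⟨i, x, hxi, hxN, hxD⟩ := hN.exists_homogeneous_mem_notMem ℳ hND
  obtain ⟨j, hj, hj1⟩ := Nat.exists_not_and_succ_of_not_zero_of_exists
    (p := fun j => (X : k[X]) ^ j • x ∈ D) (by simpa using hxD) ⟨n, by simp [hNn x hxN]⟩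
  refine ⟨i + j, _, X_pow_smul_mem hX hxi j, N.smul_mem _ hxN, hj, ?_⟩
  rwa [← mul_smul, ← pow_succ']

variable [IsScalarTower k k[X] M]

theorem isHomogeneous_span_singleton {y : M} {p : ℤ} (hy : y ∈ ℳ p) :
    (k[X] ∙ y).IsHomogeneous ℳ := by
  intro i m hm
  obtain ⟨f, rfl⟩ := mem_span_singleton.mp hm
  induction f using Polynomial.induction_on' with
  | add f g hf hg =>
    rw [add_smul, decompose_add, DirectSum.add_apply, AddMemClass.coe_add]
    exact add_mem (hf (smul_mem _ _ (mem_span_singleton_self y)))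
      (hg (smul_mem _ _ (mem_span_singleton_self y)))
  | monomial n a =>
    rw [← C_mul_X_pow_eq_monomial, mul_smul, ← algebraMap_eq, algebraMap_smul, decompose_smul,
      DirectSum.smul_apply, SetLike.val_smul]
    exact smul_of_tower_mem _ a (decompose_mem_of_homogeneous_mem ℳ (X_pow_smul_mem hX hy n)
      (smul_mem _ _ (mem_span_singleton_self y)) i)

theorem exists_X_smul_eq_of_X_pow_smul_eq_zero {y : M} {p : ℤ} {q : ℕ} (hy : y ∈ ℳ p)
    (hyq : (X : k[X]) ^ (q + 1) • y = 0) (hyq' : (X : k[X]) ^ q • y ≠ 0) {u : M} {d : ℤ}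
    (hu : u ∈ k[X] ∙ y) (hud : u ∈ ℳ (d + 1)) (hu0 : (X : k[X]) ^ q • u = 0) :
    ∃ v ∈ k[X] ∙ y, v ∈ ℳ d ∧ (X : k[X]) • v = u := by
  obtain ⟨f, rfl⟩ := mem_span_singleton.mp hu
  obtain ⟨g, rfl⟩ : X ∣ f := by
    have := (smul_eq_zero_iff_X_pow_dvd hyq hyq' _).mp (by rwa [mul_smul])
    rwa [pow_succ, mul_dvd_mul_iff_left (pow_ne_zero _ X_ne_zero)] at this
  refine ⟨decompose ℳ (g • y) d, isHomogeneous_span_singleton hX hy d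
    (smul_mem _ _ (mem_span_singleton_self y)), (decompose ℳ (g • y) d).2, ?_⟩
  rw [← decompose_X_smul hX, ← mul_smul, decompose_of_mem_same ℳ hud]

theorem exists_homogeneous_X_smul_mem_of_X_smul_mem_sup {N K : Submodule k[X] M}
    (hK : K.IsHomogeneous ℳ) {y : M} {p : ℤ} {q : ℕ} (hy : y ∈ ℳ p) (hyN : y ∈ N)
    (hyq : (X : k[X]) ^ q • y ≠ 0) (hYK : Disjoint (k[X] ∙ y) K)
    (hNq : ∀ m ∈ N, (X : k[X]) ^ (q + 1) • m = 0) {x : M} {d : ℤ} (hxd : x ∈ ℳ d)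
    (hxN : x ∈ N) (hxD : x ∉ (k[X] ∙ y) ⊔ K) (hXx : (X : k[X]) • x ∈ (k[X] ∙ y) ⊔ K) :
    ∃ x' ∈ ℳ d, x' ∈ N ∧ x' ∉ (k[X] ∙ y) ⊔ K ∧ (X : k[X]) • x' ∈ K := by
  obtain ⟨u, hu, c, hc, hsum⟩ := mem_sup.mp hXx
  set u' := (decompose ℳ u (d + 1) : M)
  set c' := (decompose ℳ c (d + 1) : M)
  have hu' : u' ∈ k[X] ∙ y := isHomogeneous_span_singleton hX hy _ hu
  have hc' : c' ∈ K := hK _ hc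
  have hXx' : (X : k[X]) • x = u' + c' := by
    rw [← decompose_of_mem_same ℳ (hX d x hxd), ← hsum, decompose_add, DirectSum.add_apply,
      AddMemClass.coe_add]
  -- `X ^ q • u' = -(X ^ q • c')` lies in both `k[X] ∙ y` and `K`
  have hu'0 : (X : k[X]) ^ q • u' = 0 := by
    have : (X : k[X]) ^ q • u' + (X : k[X]) ^ q • c' = 0 := by
      rw [← smul_add, ← hXx', ← mul_smul, ← pow_succ, hNq x hxN]
    refine disjoint_def.mp hYK _ (smul_mem _ _ hu') ?_
    rw [eq_neg_of_add_eq_zero_left this]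
    exact neg_mem (K.smul_mem _ hc')
  obtain ⟨v, hvY, hvd, hXv⟩ := exists_X_smul_eq_of_X_pow_smul_eq_zero hX hy (hNq y hyN) hyq
    hu' (decompose ℳ u (d + 1)).2 hu'0
  refine ⟨x - v, sub_mem hxd hvd, sub_mem hxN ((span_singleton_le_iff_mem y N).mpr hyN hvY),
    fun h => hxD ?_, ?_⟩
  · simpa using add_mem h (mem_sup_left hvY)
  · rwa [smul_sub, hXv, hXx', add_sub_cancel_left]

theorem exists_isHomogeneous_complement_span_singleton [IsNoetherian k[X] M]
    {N : Submodule k[X] M} (hN : N.IsHomogeneous ℳ) {q : ℕ}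
    (hNq : ∀ m ∈ N, (X : k[X]) ^ (q + 1) • m = 0) {y : M} {p : ℤ} (hy : y ∈ ℳ p)
    (hyN : y ∈ N) (hyq : (X : k[X]) ^ q • y ≠ 0) :
    ∃ K : Submodule k[X] M, K.IsHomogeneous ℳ ∧ Disjoint (k[X] ∙ y) K ∧ (k[X] ∙ y) ⊔ K = N := by
  obtain ⟨K, ⟨hKN, hK, hYK⟩, hmax⟩ := set_has_maximal_iff_noetherian.mpr ‹_›
    {K | K ≤ N ∧ K.IsHomogeneous ℳ ∧ Disjoint (k[X] ∙ y) K}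
    ⟨⊥, bot_le, isHomogeneous_bot ℳ, disjoint_bot_right⟩
  refine ⟨K, hK, hYK, le_antisymm (sup_le ((span_singleton_le_iff_mem y N).mpr hyN) hKN) ?_⟩
  by_contra hND
  obtain ⟨d, x, hxd, hxN, hxD, hXx⟩ := exists_homogeneous_X_smul_mem hX hN hND hNq
  obtain ⟨x', hx'd, hx'N, hx'D, hXx'⟩ :=
    exists_homogeneous_X_smul_mem_of_X_smul_mem_sup hX hK hy hyN hyq hYK hNq hxd hxN hxD hXx
  refine hmax (K ⊔ k[X] ∙ x') ⟨sup_le hKN ((span_singleton_le_iff_mem x' N).mpr hx'N),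
    hK.sup ℳ (isHomogeneous_span_singleton hX hx'd),
    disjoint_sup_span_singleton_of_X_smul_mem hYK hx'D hXx'⟩
    (left_lt_sup.mpr fun h => hx'D (mem_sup_right (h (mem_span_singleton_self x'))))

theorem hasGradedCyclicDecomposition [IsArtinian k[X] M] [IsNoetherian k[X] M] {n : ℕ}
    (hn : ∀ m : M, (X : k[X]) ^ n • m = 0) (N : Submodule k[X] M) (hN : N.IsHomogeneous ℳ) :
    HasGradedCyclicDecomposition ℳ N := by
  classical
  induction N using WellFoundedLT.induction with | ind N ih =>
  rcases eq_or_ne N ⊥ with rfl | hN0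
  · exact ⟨∅, by simp, by simp, by simp⟩
  obtain ⟨q, hq, hNq⟩ := Nat.exists_not_and_succ_of_not_zero_of_exists
    (p := fun q => ∀ m ∈ N, (X : k[X]) ^ q • m = 0)
    (by simpa [eq_bot_iff, SetLike.le_def] using hN0) ⟨n, fun m _ => hn m⟩
  obtain ⟨p, y, hy, hyN, hyq⟩ : ∃ p, ∃ y ∈ ℳ p, y ∈ N ∧ (X : k[X]) ^ q • y ≠ 0 :=
    hN.exists_homogeneous_mem_notMem ℳ
      (D := LinearMap.ker (LinearMap.lsmul k[X] M ((X : k[X]) ^ q))) fun h => hq fun m hm => h hm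
  obtain ⟨K, hK, hYK, hYKN⟩ := exists_isHomogeneous_complement_span_singleton hX hN hNq hy hyN hyq
  have hKN : K < N := by
    refine lt_of_le_of_ne (hYKN ▸ le_sup_right) fun hKN => hyq ?_
    rw [disjoint_def.mp hYK y (mem_span_singleton_self y) (hKN ▸ hyN), smul_zero]
  obtain ⟨Z, hZ, hZind, hZsup⟩ := ih K hKN hK
  refine ⟨insert y Z, ?_, hZind.insert (by rwa [hZsup]), by rw [Finset.sup_insert, hZsup, hYKN]⟩
  intro z hz
  rcases Finset.mem_insert.mp hz with rfl | hz
  · refine ⟨p, q + 1, by omega, hy, fun f => ?_⟩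
    rw [Ideal.mem_span_singleton]
    exact smul_eq_zero_iff_X_pow_dvd (hNq z hyN) hyq f
  · exact hZ z hz

end PolynomialModule

/-- **Structure of graded torsion modules over `A = k[t]`.** Let `k` be a field and
`A = k[t]` with `deg t = 1`. Every finitely generated graded torsion `A`-module `M`
(with grading `ℳ : ℤ → Submodule k M` compatible with multiplication by `t`) is an
internal direct sum of cyclic submodules generated by homogeneous elements `y t` of
degree `p t` whose annihilator is `(t ^ q t)` with `q t ≥ 1`; that is, `M` is
isomorphic as a graded module to a finite direct sum `⊕ A(-p)/(t^q)`. -/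
theorem graded_torsion_module_decomposition (k : Type*) [Field k]
    (M : Type*) [AddCommGroup M] [Module (Polynomial k) M] [Module k M]
    [IsScalarTower k (Polynomial k) M]
    (ℳ : ℤ → Submodule k M) (hinternal : DirectSum.IsInternal ℳ)
    (hcompat : ∀ i : ℤ, ∀ m ∈ ℳ i, (Polynomial.X : Polynomial k) • m ∈ ℳ (i + 1))
    (hfg : Module.Finite (Polynomial k) M)
    (htors : ∀ m : M, ∃ N : ℕ, (Polynomial.X : Polynomial k) ^ N • m = 0) :
    ∃ (s : ℕ) (p : Fin s → ℤ) (q : Fin s → ℕ) (y : Fin s → M),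
      (∀ t, 1 ≤ q t) ∧
      (∀ t, y t ∈ ℳ (p t)) ∧
      (∀ t, ∀ f : Polynomial k, f • y t = 0 ↔ f ∈ Ideal.span {Polynomial.X ^ q t}) ∧
      iSupIndep (fun t => Submodule.span (Polynomial k) {y t}) ∧
      (⨆ t, Submodule.span (Polynomial k) {y t}) = ⊤ := by
  let := hinternal.chooseDecomposition
  obtain ⟨n, hn⟩ := exists_pow_smul_eq_zero_of_finite (X : k[X]) htors
  have : Module.Finite k M := .of_smul_eq_zero_of_monic (monic_X_pow n) hn
  have : IsArtinian k[X] M := isArtinian_of_tower k inferInstance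
  have : IsNoetherian k[X] M := isNoetherian_of_tower k inferInstance
  exact (hasGradedCyclicDecomposition hcompat hn ⊤ (isHomogeneous_top ℳ)).exists_fin
end

section
/- Let A = k[t] and let G be a bounded complex of finitely generated free graded A-modules whose homology modules are all torsion. Then for all i, j, the functional χ_{i,j} evaluated on the Betti table of G is nonnegative. -/
/-- The Eisenbud–Erman functional `χ_{i,j}` on Betti tables over `A = k[t]`. -/
noncomputable def chiFunctional (β : ℤ → ℤ → ℚ) (i j : ℤ) : ℚ :=
  (∑ᶠ m ∈ Set.Iic j, β i m) - (∑ᶠ m ∈ Set.Iic (j + 1), β (i + 1) m)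
    + ∑ᶠ p ∈ Set.Ici (i + 2), (-1 : ℚ) ^ (p - i) * ∑ᶠ m : ℤ, β p m

/-- The Betti table of a minimal complex of graded free modules, given by counting
generators: `β_{i,j}` is the number of generators of `F_i` of degree `j`. -/
noncomputable def bettiTable (rank : ℤ → ℕ) (deg : ∀ i : ℤ, Fin (rank i) → ℤ) :
    ℤ → ℤ → ℚ :=
  fun i j => ((Finset.univ.filter fun a => deg i a = j).card : ℚ)

/-!
Write `ρ p` for the rank of the image of `d p : G_{p+1} → G_p`. Since the homology is torsion,
the kernel of `d p` has the same rank as the image of `d (p+1)`, so rank-nullity gives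
`rank G_{p+1} = ρ p + ρ (p+1)`. The alternating tail of `χ_{i,j}` therefore telescopes to
`ρ (i+1)`, and splitting the generators of `G_{i+1}` at degree `j + 1` turns the claim into
`ρ i ≤ #{generators of G_i of degree ≤ j} + #{generators of G_{i+1} of degree > j + 1}`.
This holds by minimality: a generator of `G_{i+1}` of degree `≤ j + 1` is mapped into the span
of the generators of `G_i` of degree `≤ j`.
-/

open Module Finset

lemma finsum_mem_card_filter_eq {ι α : Type*} [Fintype ι] [DecidableEq α] (f : ι → α)
    (s : Set α) [DecidablePred (· ∈ s)] :
    ∑ᶠ m ∈ s, (#{a | f a = m} : ℚ) = #{a | f a ∈ s} := by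
  calc ∑ᶠ m ∈ s, (#{a | f a = m} : ℚ)
      = ∑ᶠ m, ∑ a ∈ ({a | f a ∈ s} : Finset ι) with f a = m, (1 : ℚ) := by
        refine finsum_congr fun m => ?_
        simp only [sum_const, nsmul_one, filter_filter]
        by_cases hm : m ∈ s
        · simp only [hm, finsum_true]
          congr 3
          grind
        · simp only [hm, finsum_false]
          rw [eq_comm, Nat.cast_eq_zero, card_eq_zero, filter_eq_empty_iff]
          grind
    _ = #{a | f a ∈ s} := by rw [finsum_sum_filter]; simp

lemma Submodule.rank_eq_of_le_of_smul_mem {R M : Type*} [CommRing R] [IsDomain R]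
    [AddCommGroup M] [Module R M] {N P : Submodule R M} (hNP : N ≤ P)
    (h : ∀ x ∈ P, ∃ r : R, r ≠ 0 ∧ r • x ∈ N) :
    Module.rank R P = Module.rank R N := by
  have hquot : Module.rank R (P ⧸ N.comap P.subtype) = 0 := by
    rw [rank_eq_zero_iff]
    intro x
    obtain ⟨x, rfl⟩ := Submodule.Quotient.mk_surjective _ x
    obtain ⟨r, hr, hrx⟩ := h x x.2
    exact ⟨r, hr, (Submodule.Quotient.mk_eq_zero _).2 hrx⟩
  rw [← (Submodule.comapSubtypeEquivOfLe hNP).rank_eq, ← rank_quotient_add_rank, hquot, zero_add]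

lemma LinearMap.finrank_range_add_finrank_range_of_smul_mem {R M N P : Type*} [CommRing R]
    [IsDomain R] [AddCommGroup M] [AddCommGroup N] [AddCommGroup P] [Module R M] [Module R N]
    [Module R P] [Module.Finite R N] (f : M →ₗ[R] N) (g : N →ₗ[R] P) (hgf : g ∘ₗ f = 0)
    (h : ∀ x ∈ LinearMap.ker g, ∃ r : R, r ≠ 0 ∧ r • x ∈ LinearMap.range f) :
    finrank R (LinearMap.range f) + finrank R (LinearMap.range g) = finrank R N := by
  have hker : finrank R (LinearMap.ker g) = finrank R (LinearMap.range f) :=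
    congrArg Cardinal.toNat
      (Submodule.rank_eq_of_le_of_smul_mem (LinearMap.range_le_ker_iff.2 hgf) h)
  rw [← hker, ← (LinearMap.ker g).finrank_quotient_add_finrank, g.quotKerEquivRange.finrank_eq,
    add_comm]

lemma LinearMap.finrank_range_le_card_add_card {R ι κ α : Type*} [CommRing R] [IsDomain R]
    [Fintype ι] [Fintype κ] [DecidableEq ι] [LinearOrder α]
    (f : (ι → R) →ₗ[R] κ → R) (dsrc : ι → α) (dtgt : κ → α) (c : α)
    (hf : ∀ a b, dsrc a ≤ dtgt b → f (Pi.single a 1) b = 0) :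
    finrank R (LinearMap.range f) ≤ #{b | dtgt b < c} + #{a | c < dsrc a} := by
  classical
  let W := Submodule.span R
    (({b | dtgt b < c} : Finset κ).image (Pi.basisFun R κ) : Set (κ → R))
  let T := Submodule.span R
    (({a | c < dsrc a} : Finset ι).image (fun a => f (Pi.single a 1)) : Set (κ → R))
  have hle : LinearMap.range f ≤ W ⊔ T := by
    rw [LinearMap.range_eq_map, ← (Pi.basisFun R ι).span_eq, Submodule.map_span,
      Submodule.span_le]
    rintro _ ⟨_, ⟨a, rfl⟩, rfl⟩
    rw [Pi.basisFun_apply]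
    by_cases ha : c < dsrc a
    · exact Submodule.mem_sup_right (Submodule.subset_span (by simpa using ⟨a, ha, rfl⟩))
    · refine Submodule.mem_sup_left ?_
      simp only [W, coe_image, Basis.mem_span_image]
      intro b hb
      rw [Finset.mem_coe, Finsupp.mem_support_iff, Pi.basisFun_repr] at hb
      simpa using lt_of_not_ge fun hbc => hb (hf a b ((not_lt.1 ha).trans hbc))
  refine finrank_le_of_rank_le ?_
  calc Module.rank R (LinearMap.range f) ≤ Module.rank R (W ⊔ T : Submodule R (κ → R)) :=
        Submodule.rank_mono hle
    _ ≤ Module.rank R W + Module.rank R T := Submodule.rank_add_le_rank_add_rank W T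
    _ ≤ _ := by
        push_cast
        gcongr
        · exact (rank_span_finset_le _).trans (by exact_mod_cast card_image_le)
        · exact (rank_span_finset_le _).trans (by exact_mod_cast card_image_le)

lemma finsum_mem_Ici_neg_one_zpow_mul_eq {r ρ : ℤ → ℕ} (hr : {p | r p ≠ 0}.Finite)
    (hrρ : ∀ p, r (p + 1) = ρ p + ρ (p + 1)) (i : ℤ) :
    ∑ᶠ p ∈ Set.Ici (i + 2), (-1 : ℚ) ^ (p - i) * r p = ρ (i + 1) := by
  obtain ⟨b, hb⟩ := hr.bddAbove
  let a : ℕ → ℚ := fun q => (-1) ^ q * ρ (i + 1 + q)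
  have hterm (q : ℕ) : (-1 : ℚ) ^ (i + 2 + q - i) * r (i + 2 + q) = a q - a (q + 1) := by
    rw [show i + 2 + (q : ℤ) - i = (q + 2 : ℕ) by push_cast; ring, zpow_natCast,
      show i + 2 + (q : ℤ) = i + 1 + q + 1 by ring, hrρ]
    push_cast [a]
    ring_nf
  have ha (q : ℕ) (hq : (b - i).toNat ≤ q) : a q = 0 := by
    have hr0 : r (i + 1 + q + 1) = 0 := by
      by_contra hne
      have := hb hne
      omega
    have := hrρ (i + 1 + q)
    simp [a, show ρ (i + 1 + q) = 0 by omega]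
  have hIci : Set.Ici (i + 2) = Set.range fun q : ℕ => i + 2 + q := by
    ext p
    refine ⟨fun hp => ⟨(p - (i + 2)).toNat, ?_⟩, by rintro ⟨q, rfl⟩; simp⟩
    simp only [Set.mem_Ici] at hp
    dsimp only
    omega
  calc ∑ᶠ p ∈ Set.Ici (i + 2), (-1 : ℚ) ^ (p - i) * r p
      = ∑ᶠ q : ℕ, (a q - a (q + 1)) := by
        rw [hIci, finsum_mem_range fun _ _ h => by simpa using h]
        exact finsum_congr hterm
    _ = ∑ q ∈ range (b - i).toNat, (a q - a (q + 1)) := by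
        refine finsum_eq_sum_of_support_subset _ fun q hq => ?_
        by_contra hqn
        simp only [coe_range, Set.mem_Iio, not_lt] at hqn
        exact hq (by simp only [ha q hqn, ha (q + 1) (by omega), sub_zero])
    _ = ρ (i + 1) := by rw [sum_range_sub', ha _ le_rfl]; simp [a]

lemma finsum_mem_bettiTable (rank : ℤ → ℕ) (deg : ∀ i : ℤ, Fin (rank i) → ℤ) (p : ℤ)
    (s : Set ℤ) [DecidablePred (· ∈ s)] :
    ∑ᶠ m ∈ s, bettiTable rank deg p m = #{a | deg p a ∈ s} :=
  finsum_mem_card_filter_eq (deg p) s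

lemma finsum_bettiTable (rank : ℤ → ℕ) (deg : ∀ i : ℤ, Fin (rank i) → ℤ) (p : ℤ) :
    ∑ᶠ m, bettiTable rank deg p m = rank p := by
  simpa using finsum_mem_bettiTable rank deg p Set.univ

lemma chiFunctional_bettiTable_eq {rank ρ : ℤ → ℕ} (deg : ∀ i : ℤ, Fin (rank i) → ℤ)
    (hbdd : {p | rank p ≠ 0}.Finite) (hρ : ∀ p, rank (p + 1) = ρ p + ρ (p + 1)) (i j : ℤ) :
    chiFunctional (bettiTable rank deg) i j
      = #{a | deg i a ≤ j} - #{a | deg (i + 1) a ≤ j + 1} + ρ (i + 1) := by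
  rw [chiFunctional, finsum_mem_bettiTable, finsum_mem_bettiTable]
  simp only [finsum_bettiTable, finsum_mem_Ici_neg_one_zpow_mul_eq hbdd hρ, Set.mem_Iic]

/-- **Nonnegativity of `χ_{i,j}` on complexes with torsion homology.** Let `A = k[t]`
and let `G` be a bounded minimal complex of finitely generated graded free `A`-modules
(given by ranks, generator degrees, and homogeneous differentials `d i : G_{i+1} → G_i`
with entries in `(t)`). If all homology modules of `G` are torsion, then
`χ_{i,j}(β(G)) ≥ 0` for all `i, j`. -/
theorem chi_nonneg_of_torsion_homology (k : Type*) [Field k]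
    (rank : ℤ → ℕ) (deg : ∀ i : ℤ, Fin (rank i) → ℤ)
    (d : ∀ i : ℤ,
      (Fin (rank (i + 1)) → Polynomial k) →ₗ[Polynomial k] (Fin (rank i) → Polynomial k))
    (hbdd : {i : ℤ | rank i ≠ 0}.Finite)
    (hcomplex : ∀ i, (d i).comp (d (i + 1)) = 0)
    (hminhom : ∀ (i : ℤ) (a : Fin (rank (i + 1))) (b : Fin (rank i)),
      (∃ c : k, d i (Pi.single a 1) b
          = Polynomial.C c * Polynomial.X ^ (deg (i + 1) a - deg i b).toNat) ∧
        (deg (i + 1) a ≤ deg i b → d i (Pi.single a 1) b = 0))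
    (htorsion : ∀ (i : ℤ) (x : Fin (rank (i + 1)) → Polynomial k), d i x = 0 →
      ∃ (N : ℕ) (y : Fin (rank (i + 1 + 1)) → Polynomial k),
        d (i + 1) y = (Polynomial.X : Polynomial k) ^ N • x) :
    ∀ i j : ℤ, 0 ≤ chiFunctional (bettiTable rank deg) i j := by
  intro i j
  have hρ (p : ℤ) : rank (p + 1) = finrank (Polynomial k) (LinearMap.range (d p))
      + finrank (Polynomial k) (LinearMap.range (d (p + 1))) := by
    have := (d (p + 1)).finrank_range_add_finrank_range_of_smul_mem (d p) (hcomplex p)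
      fun x hx => by
        obtain ⟨N, y, hy⟩ := htorsion p x hx
        exact ⟨_, pow_ne_zero N Polynomial.X_ne_zero, y, hy⟩
    rw [finrank_fin_fun] at this
    omega
  have hbound := (d i).finrank_range_le_card_add_card (deg (i + 1)) (deg i) (j + 1)
    fun a b => (hminhom i a b).2
  have hsplit := card_filter_add_card_filter_not (s := univ) fun a => deg (i + 1) a ≤ j + 1
  simp only [Int.lt_add_one_iff, not_le, card_univ, Fintype.card_fin] at hbound hsplit
  have hcount : #{a | deg (i + 1) a ≤ j + 1}
      ≤ #{a | deg i a ≤ j} + finrank (Polynomial k) (LinearMap.range (d (i + 1))) := by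
    have := hρ i
    omega
  rw [chiFunctional_bettiTable_eq deg hbdd hρ, sub_add_eq_add_sub, sub_nonneg]
  exact_mod_cast hcount
end

section
/- Let d = (d_0 < d_1 < ... < d_{n+1}) be a degree sequence of codimension n+1 and define the pure Betti table π(d) with entries π(d)_{i, d_i} = Π_{j ≠ i} 1/|d_j - d_i| for 0 ≤ i ≤ n+1 and zero elsewhere. Then there exist positive rationals a, b such that π(d_0,...,d_{n+1}) = a·π(d_0,...,d_n) + b·π'(d_1,...,d_{n+1}), where π' denotes the pure table of codimension n supported in homological degrees 1,...,n+1. -/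
/-- The normalized pure Betti table of a strictly increasing degree sequence
`e : Fin (s+1) → ℤ`, placed so that the entry in homological degree `ℓ + shift`
and internal degree `e ℓ` is the Herzog–Kühl value `∏_{m ≠ ℓ} 1/|e m - e ℓ|`,
all other entries being zero. -/
noncomputable def pureTable (s : ℕ) (e : Fin (s + 1) → ℤ) (shift : ℤ) : ℤ → ℤ → ℚ :=
  fun i j => ∑ ℓ : Fin (s + 1),
    if (ℓ : ℤ) + shift = i ∧ e ℓ = j then
      ∏ m ∈ Finset.univ.erase ℓ, 1 / |(e m : ℚ) - (e ℓ : ℚ)|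
    else 0

lemma erase_castSucc_eq (n : ℕ) (ℓ : Fin (n + 1)) :
    (Finset.univ.erase (Fin.castSucc ℓ) : Finset (Fin (n + 2))) =
      insert (Fin.last (n + 1)) ((Finset.univ.erase ℓ).image Fin.castSucc) := by
  ext x
  constructor
  · intro hx
    have hxne := Finset.ne_of_mem_erase hx
    rcases Fin.eq_castSucc_or_eq_last x with ⟨y, rfl⟩ | rfl
    · refine Finset.mem_insert_of_mem (Finset.mem_image.mpr
        ⟨y, Finset.mem_erase.mpr ⟨?_, Finset.mem_univ _⟩, rfl⟩)
      intro h; exact hxne (by rw [h])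
    · exact Finset.mem_insert_self _ _
  · intro hx
    rcases Finset.mem_insert.mp hx with rfl | hx
    · exact Finset.mem_erase.mpr ⟨(Fin.castSucc_lt_last ℓ).ne', Finset.mem_univ _⟩
    · obtain ⟨y, hy, rfl⟩ := Finset.mem_image.mp hx
      exact Finset.mem_erase.mpr
        ⟨fun h => (Finset.mem_erase.mp hy).1 (Fin.castSucc_injective _ h), Finset.mem_univ _⟩

lemma erase_succ_eq (n : ℕ) (ℓ : Fin (n + 1)) :
    (Finset.univ.erase (Fin.succ ℓ) : Finset (Fin (n + 2))) =
      insert 0 ((Finset.univ.erase ℓ).image Fin.succ) := by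
  ext x
  constructor
  · intro hx
    have hxne := Finset.ne_of_mem_erase hx
    rcases Fin.eq_zero_or_eq_succ x with rfl | ⟨y, rfl⟩
    · exact Finset.mem_insert_self _ _
    · refine Finset.mem_insert_of_mem (Finset.mem_image.mpr
        ⟨y, Finset.mem_erase.mpr ⟨?_, Finset.mem_univ _⟩, rfl⟩)
      intro h; exact hxne (by rw [h])
  · intro hx
    rcases Finset.mem_insert.mp hx with rfl | hx
    · exact Finset.mem_erase.mpr ⟨(Fin.succ_ne_zero ℓ).symm, Finset.mem_univ _⟩
    · obtain ⟨y, hy, rfl⟩ := Finset.mem_image.mp hx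
      exact Finset.mem_erase.mpr
        ⟨fun h => (Finset.mem_erase.mp hy).1 (Fin.succ_injective _ h), Finset.mem_univ _⟩

lemma prod_erase_castSucc (n : ℕ) (φ : Fin (n + 2) → ℚ) (ℓ : Fin (n + 1)) :
    ∏ m ∈ Finset.univ.erase (Fin.castSucc ℓ), φ m =
      φ (Fin.last (n + 1)) * ∏ m ∈ Finset.univ.erase ℓ, φ (Fin.castSucc m) := by
  rw [erase_castSucc_eq, Finset.prod_insert, Finset.prod_image]
  · intro a _ b _ h; exact Fin.castSucc_injective _ h
  · simp only [Finset.mem_image, not_exists]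
    intro x
    rintro ⟨-, hx⟩
    exact (Fin.castSucc_lt_last x).ne hx

lemma prod_erase_succ (n : ℕ) (φ : Fin (n + 2) → ℚ) (ℓ : Fin (n + 1)) :
    ∏ m ∈ Finset.univ.erase (Fin.succ ℓ), φ m =
      φ 0 * ∏ m ∈ Finset.univ.erase ℓ, φ (Fin.succ m) := by
  rw [erase_succ_eq, Finset.prod_insert, Finset.prod_image]
  · intro a _ b _ h; exact Fin.succ_injective _ h
  · simp only [Finset.mem_image, not_exists]
    intro x
    rintro ⟨-, hx⟩
    exact (Fin.succ_ne_zero x) hx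

/-- **Boij's decomposition of a pure table.** The pure table of a degree sequence
`d_0 < ... < d_{n+1}` of codimension `n+1` is a positive rational combination of the
pure table of `(d_0,...,d_n)` (in homological degrees `0,...,n`) and the pure table of
`(d_1,...,d_{n+1})` placed in homological degrees `1,...,n+1`. -/
theorem pure_table_decomposition (n : ℕ) (d : Fin (n + 2) → ℤ) (hd : StrictMono d) :
    ∃ a b : ℚ, 0 < a ∧ 0 < b ∧ ∀ i j : ℤ,
      pureTable (n + 1) d 0 i j =
        a * pureTable n (d ∘ Fin.castSucc) 0 i j + b * pureTable n (d ∘ Fin.succ) 1 i j := by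
  set D : ℚ := (d (Fin.last (n + 1)) : ℚ) - (d 0 : ℚ) with hDdef
  have h0last : (0 : Fin (n + 2)) < Fin.last (n + 1) :=
    Fin.pos_iff_ne_zero.mpr (by simp [Fin.ext_iff])
  have hlt : (d 0 : ℚ) < (d (Fin.last (n + 1)) : ℚ) := by exact_mod_cast hd h0last
  have hDpos : 0 < D := by rw [hDdef]; linarith
  refine ⟨1 / D, 1 / D, by positivity, by positivity, fun i j => ?_⟩
  set F : Fin (n + 2) → ℚ := fun ℓ =>
    if (ℓ : ℤ) + 0 = i ∧ d ℓ = j then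
      ∏ m ∈ Finset.univ.erase ℓ, 1 / |(d m : ℚ) - (d ℓ : ℚ)| else 0 with hF
  set G : Fin (n + 2) → ℚ := fun ℓ => (|(d (Fin.last (n + 1)) : ℚ) - d ℓ| / D) * F ℓ with hG
  set H : Fin (n + 2) → ℚ := fun ℓ => (|(d ℓ : ℚ) - d 0| / D) * F ℓ with hH
  have hsplit : ∀ ℓ, F ℓ = G ℓ + H ℓ := by
    intro ℓ
    have h1 : (d 0 : ℚ) ≤ d ℓ := by exact_mod_cast (hd.monotone (Fin.zero_le ℓ))
    have h2 : (d ℓ : ℚ) ≤ d (Fin.last (n + 1)) := by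
      exact_mod_cast (hd.monotone (Fin.le_last ℓ))
    have habs : |(d (Fin.last (n + 1)) : ℚ) - d ℓ| + |(d ℓ : ℚ) - d 0| = D := by
      rw [abs_of_nonneg (by linarith), abs_of_nonneg (by linarith), hDdef]; ring
    simp only [hG, hH]
    rw [← add_mul, ← add_div, habs, div_self hDpos.ne', one_mul]
  have hGterm : ∀ ℓ : Fin (n + 1), G (Fin.castSucc ℓ) =
      (1 / D) * (if (ℓ : ℤ) + 0 = i ∧ (d ∘ Fin.castSucc) ℓ = j then
        ∏ m ∈ Finset.univ.erase ℓ,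
          1 / |((d ∘ Fin.castSucc) m : ℚ) - ((d ∘ Fin.castSucc) ℓ : ℚ)| else 0) := by
    intro ℓ
    have hX : (0 : ℚ) < |(d (Fin.last (n + 1)) : ℚ) - d (Fin.castSucc ℓ)| := by
      rw [abs_pos, sub_ne_zero]
      exact_mod_cast (hd (Fin.castSucc_lt_last ℓ)).ne'
    simp only [hG, hF, Function.comp, Fin.coe_castSucc]
    split_ifs with h
    · rw [prod_erase_castSucc n (fun m => 1 / |(d m : ℚ) - d (Fin.castSucc ℓ)|) ℓ]
      set X : ℚ := |(d (Fin.last (n + 1)) : ℚ) - d (Fin.castSucc ℓ)| with hXdef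
      set P : ℚ := ∏ m ∈ Finset.univ.erase ℓ,
        1 / |(d (Fin.castSucc m) : ℚ) - (d (Fin.castSucc ℓ) : ℚ)| with hPdef
      rw [one_div X, div_mul_eq_mul_div, ← mul_assoc, mul_inv_cancel₀ hX.ne', one_mul,
        one_div_mul_eq_div]
    · ring
  have hHterm : ∀ ℓ : Fin (n + 1), H (Fin.succ ℓ) =
      (1 / D) * (if (ℓ : ℤ) + 1 = i ∧ (d ∘ Fin.succ) ℓ = j then
        ∏ m ∈ Finset.univ.erase ℓ,
          1 / |((d ∘ Fin.succ) m : ℚ) - ((d ∘ Fin.succ) ℓ : ℚ)| else 0) := by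
    intro ℓ
    have hY : (0 : ℚ) < |(d (Fin.succ ℓ) : ℚ) - d 0| := by
      rw [abs_pos, sub_ne_zero]
      exact_mod_cast (hd (Fin.succ_pos ℓ)).ne'
    have hcoe : ((Fin.succ ℓ : Fin (n + 2)) : ℤ) + 0 = (ℓ : ℤ) + 1 := by
      simp [Fin.val_succ]
    simp only [hH, hF, Function.comp, hcoe]
    split_ifs with h
    · rw [prod_erase_succ n (fun m => 1 / |(d m : ℚ) - d (Fin.succ ℓ)|) ℓ]
      rw [show (1 : ℚ) / |(d (0 : Fin (n + 2)) : ℚ) - d (Fin.succ ℓ)| =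
        1 / |(d (Fin.succ ℓ) : ℚ) - d 0| from by rw [abs_sub_comm]]
      set Y : ℚ := |(d (Fin.succ ℓ) : ℚ) - d 0| with hYdef
      set Q : ℚ := ∏ m ∈ Finset.univ.erase ℓ,
        1 / |(d (Fin.succ m) : ℚ) - (d (Fin.succ ℓ) : ℚ)| with hQdef
      rw [one_div Y, div_mul_eq_mul_div, ← mul_assoc, mul_inv_cancel₀ hY.ne', one_mul,
        one_div_mul_eq_div]
    · ring
  have hGlast : G (Fin.last (n + 1)) = 0 := by
    show |(d (Fin.last (n + 1)) : ℚ) - d (Fin.last (n + 1))| / D * F (Fin.last (n + 1)) = 0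
    rw [sub_self, abs_zero, zero_div, zero_mul]
  have hH0 : H 0 = 0 := by
    show |(d (0 : Fin (n + 2)) : ℚ) - d 0| / D * F 0 = 0
    rw [sub_self, abs_zero, zero_div, zero_mul]
  show (∑ ℓ : Fin (n + 2), F ℓ) =
      (1 / D) * (∑ ℓ : Fin (n + 1), if (ℓ : ℤ) + 0 = i ∧ (d ∘ Fin.castSucc) ℓ = j then
        ∏ m ∈ Finset.univ.erase ℓ,
          1 / |((d ∘ Fin.castSucc) m : ℚ) - ((d ∘ Fin.castSucc) ℓ : ℚ)| else 0) +
      (1 / D) * (∑ ℓ : Fin (n + 1), if (ℓ : ℤ) + 1 = i ∧ (d ∘ Fin.succ) ℓ = j then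
        ∏ m ∈ Finset.univ.erase ℓ,
          1 / |((d ∘ Fin.succ) m : ℚ) - ((d ∘ Fin.succ) ℓ : ℚ)| else 0)
  calc ∑ ℓ : Fin (n + 2), F ℓ
      = ∑ ℓ : Fin (n + 2), (G ℓ + H ℓ) := Finset.sum_congr rfl fun ℓ _ => hsplit ℓ
    _ = (∑ ℓ : Fin (n + 2), G ℓ) + ∑ ℓ : Fin (n + 2), H ℓ := Finset.sum_add_distrib
    _ = (∑ ℓ : Fin (n + 1), G (Fin.castSucc ℓ)) + ∑ ℓ : Fin (n + 1), H (Fin.succ ℓ) := by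
        rw [Fin.sum_univ_castSucc (f := G), Fin.sum_univ_succ (f := H), hGlast, hH0]
        ring
    _ = _ := by
        rw [Finset.sum_congr rfl fun ℓ _ => hGterm ℓ,
          Finset.sum_congr rfl fun ℓ _ => hHterm ℓ, ← Finset.mul_sum, ← Finset.mul_sum]
end

section
/- Let A = k[t] and let u be a finitely supported table of nonnegative integers (u_{i,j}) satisfying: χ_{i,j}(u) ≥ 0 for all i, j, and total Euler characteristic Σ_{i,j}(-1)^i u_{i,j} = 0. Then u can be written as a finite sum of Betti tables of shifted minimal free resolutions of cyclic torsion modules A(-p)/(t^q), i.e., u = Σ_m c_m·T_m where c_m ∈ ℤ_{>0} and each T_m is the table with entry 1 at (s, p) and entry 1 at (s+1, p+q) for some s, p ∈ ℤ, q ≥ 1. -/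
open Function

/-- sign -/
def sgn (z : ℤ) : ℤ := if Even z then 1 else -1

lemma sgn_cast (z : ℤ) : ((sgn z : ℤ) : ℚ) = (-1 : ℚ) ^ z := by
  rcases Int.even_or_odd z with h | h
  · simp [sgn, h, Even.neg_one_zpow]
  · rw [h.neg_one_zpow]
    simp [sgn, Int.not_even_iff_odd.2 h]

lemma sgn_add_one (z : ℤ) : sgn (z + 1) = - sgn z := by
  simp only [sgn, Int.even_add_one]
  by_cases h : Even z <;> simp [h]

lemma sgn_add_two (z : ℤ) : sgn (z + 2) = sgn z := by
  have : z + 2 = (z + 1) + 1 := by ring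
  rw [this, sgn_add_one, sgn_add_one, neg_neg]

lemma sgn_sub (a b : ℤ) : sgn (a - b) = sgn a * sgn b := by
  simp only [sgn, Int.even_sub]
  by_cases ha : Even a <;> by_cases hb : Even b <;> simp [ha, hb]

lemma sgn_self_mul (z : ℤ) : sgn z * sgn z = 1 := by
  simp only [sgn]; by_cases h : Even z <;> simp [h]

section conv
variable {M : Type*} [AddCommMonoid M]

lemma fs_Iic (f : ℤ → M) {E : Finset ℤ} (h : support f ⊆ ↑E) (j : ℤ) :
    ∑ᶠ m ∈ Set.Iic j, f m = ∑ m ∈ E.filter (· ≤ j), f m := by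
  apply finsum_mem_eq_sum_of_inter_support_eq
  ext x
  simp only [Set.mem_inter_iff, Set.mem_Iic, Finset.coe_filter, Set.mem_setOf_eq,
    Function.mem_support]
  constructor
  · rintro ⟨h1, h2⟩; exact ⟨⟨h h2, h1⟩, h2⟩
  · rintro ⟨⟨_, h1⟩, h2⟩; exact ⟨h1, h2⟩

lemma fs_Ici (f : ℤ → M) {E : Finset ℤ} (h : support f ⊆ ↑E) (i : ℤ) :
    ∑ᶠ m ∈ Set.Ici i, f m = ∑ m ∈ E.filter (i ≤ ·), f m := by
  apply finsum_mem_eq_sum_of_inter_support_eq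
  ext x
  simp only [Set.mem_inter_iff, Set.mem_Ici, Finset.coe_filter, Set.mem_setOf_eq,
    Function.mem_support]
  constructor
  · rintro ⟨h1, h2⟩; exact ⟨⟨h h2, h1⟩, h2⟩
  · rintro ⟨⟨_, h1⟩, h2⟩; exact ⟨h1, h2⟩

lemma fs_univ {α : Type*} (f : α → M) {E : Finset α} (h : support f ⊆ ↑E) :
    ∑ᶠ m, f m = ∑ m ∈ E, f m :=
  finsum_eq_sum_of_support_subset f h

end conv

noncomputable def cnt (u : ℤ → ℤ → ℕ) (i j : ℤ) : ℕ := ∑ᶠ m ∈ Set.Iic j, u i m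
noncomputable def rowS (u : ℤ → ℤ → ℕ) (i : ℤ) : ℕ := ∑ᶠ m, u i m
noncomputable def tailZ (u : ℤ → ℤ → ℕ) (i : ℤ) : ℤ :=
  ∑ᶠ p ∈ Set.Ici i, sgn (p - i) * (rowS u p : ℤ)
noncomputable def chiZ (u : ℤ → ℤ → ℕ) (i j : ℤ) : ℤ :=
  (cnt u i j : ℤ) - (cnt u (i + 1) (j + 1) : ℤ) + tailZ u (i + 2)
noncomputable def eulZ (u : ℤ → ℤ → ℕ) : ℤ := ∑ᶠ a : ℤ, sgn a * (rowS u a : ℤ)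
noncomputable def massZ (u : ℤ → ℤ → ℕ) : ℕ := ∑ᶠ x : ℤ × ℤ, u x.1 x.2

section tables
variable {u : ℤ → ℤ → ℕ} (hfin : (Function.support fun x : ℤ × ℤ => u x.1 x.2).Finite)
include hfin

/-- column superset -/
lemma support_row (i : ℤ) :
    support (u i) ⊆ ↑(hfin.toFinset.image Prod.snd) := by
  intro m hm
  simp only [Finset.coe_image, Set.mem_image, Finset.mem_coe, Set.Finite.mem_toFinset]
  exact ⟨(i, m), hm, rfl⟩

omit hfin in
lemma rowS_ne_zero {i : ℤ} (h : rowS u i ≠ 0) : ∃ m, u i m ≠ 0 := by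
  by_contra hc
  push_neg at hc
  exact h (by simp only [rowS]; exact finsum_eq_zero_of_forall_eq_zero hc)

lemma support_rowS :
    support (fun i => (rowS u i : ℤ)) ⊆ ↑(hfin.toFinset.image Prod.fst) := by
  intro i hi
  simp only [mem_support, ne_eq, Int.natCast_eq_zero] at hi
  obtain ⟨m, hm⟩ := rowS_ne_zero hi
  simp only [Finset.coe_image, Set.mem_image, Finset.mem_coe, Set.Finite.mem_toFinset]
  exact ⟨(i, m), hm, rfl⟩

lemma support_tail_integrand (k : ℤ) :
    support (fun p => sgn (p - k) * (rowS u p : ℤ)) ⊆ ↑(hfin.toFinset.image Prod.fst) := by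
  intro i hi
  apply support_rowS hfin
  simp only [mem_support, ne_eq] at hi ⊢
  intro h0
  exact hi (by rw [h0, mul_zero])

lemma cnt_eq_sum {E : Finset ℤ} (hE : hfin.toFinset.image Prod.snd ⊆ E) (i j : ℤ) :
    cnt u i j = ∑ m ∈ E.filter (· ≤ j), u i m :=
  fs_Iic _ ((support_row hfin i).trans (Finset.coe_subset.2 hE)) j

lemma rowS_eq_sum {E : Finset ℤ} (hE : hfin.toFinset.image Prod.snd ⊆ E) (i : ℤ) :
    rowS u i = ∑ m ∈ E, u i m :=
  fs_univ _ ((support_row hfin i).trans (Finset.coe_subset.2 hE))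

lemma tailZ_eq_sum {F : Finset ℤ} (hF : hfin.toFinset.image Prod.fst ⊆ F) (i : ℤ) :
    tailZ u i = ∑ p ∈ F.filter (i ≤ ·), sgn (p - i) * (rowS u p : ℤ) :=
  fs_Ici _ ((support_tail_integrand hfin i).trans (Finset.coe_subset.2 hF)) i

lemma eulZ_eq_sum {F : Finset ℤ} (hF : hfin.toFinset.image Prod.fst ⊆ F) :
    eulZ u = ∑ a ∈ F, sgn a * (rowS u a : ℤ) := by
  apply fs_univ
  intro i hi
  apply Finset.coe_subset.2 hF
  apply support_rowS hfin
  simp only [mem_support, ne_eq] at hi ⊢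
  intro h0
  exact hi (by rw [h0, mul_zero])

lemma massZ_eq_sum {G : Finset (ℤ × ℤ)} (hG : hfin.toFinset ⊆ G) :
    massZ u = ∑ x ∈ G, u x.1 x.2 := by
  apply fs_univ
  intro x hx
  exact Finset.coe_subset.2 hG (by simpa using hx)

lemma rowQ_eq (p : ℤ) : (∑ᶠ m : ℤ, (u p m : ℚ)) = ((rowS u p : ℕ) : ℚ) := by
  have hs : support (fun m => (u p m : ℚ)) ⊆ ↑(hfin.toFinset.image Prod.snd) := by
    intro m hm
    apply support_row hfin p
    simpa using hm
  rw [fs_univ _ hs, rowS_eq_sum hfin (le_refl _)]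
  push_cast
  rfl

lemma chi_conv (i j : ℤ) :
    chiFunctional (fun a b => (u a b : ℚ)) i j = (chiZ u i j : ℚ) := by
  have hcolQ : ∀ a, support (fun m => (u a m : ℚ)) ⊆ ↑(hfin.toFinset.image Prod.snd) := by
    intro a m hm
    apply support_row hfin a
    simpa using hm
  have hrowQ : support (fun p => (-1 : ℚ) ^ (p - i) * ∑ᶠ m : ℤ, (u p m : ℚ)) ⊆
      ↑(hfin.toFinset.image Prod.fst) := by
    intro a ha
    apply support_rowS hfin
    simp only [mem_support, ne_eq, Int.natCast_eq_zero] at ha ⊢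
    intro h0
    apply ha
    rw [rowQ_eq hfin, h0]
    simp
  rw [chiFunctional, fs_Iic _ (hcolQ i) j, fs_Iic _ (hcolQ (i+1)) (j+1), fs_Ici _ hrowQ (i+2),
    chiZ, cnt_eq_sum hfin (le_refl _), cnt_eq_sum hfin (le_refl _),
    tailZ_eq_sum hfin (le_refl _)]
  push_cast
  congr 1
  apply Finset.sum_congr rfl
  intro p _
  rw [rowQ_eq hfin]
  have hsg : (-1 : ℚ) ^ (p - i) = ((sgn (p - (i + 2)) : ℤ) : ℚ) := by
    rw [show p - i = (p - (i + 2)) + 2 by ring, ← sgn_add_two, sgn_cast]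
  rw [hsg]
  try push_cast
  try ring

lemma eul_conv :
    (∑ᶠ a : ℤ, (-1 : ℚ) ^ a * ∑ᶠ b : ℤ, (u a b : ℚ)) = (eulZ u : ℚ) := by
  have hrowQ : support (fun a => (-1 : ℚ) ^ a * ∑ᶠ m : ℤ, (u a m : ℚ)) ⊆
      ↑(hfin.toFinset.image Prod.fst) := by
    intro a ha
    apply support_rowS hfin
    simp only [mem_support, ne_eq, Int.natCast_eq_zero] at ha ⊢
    intro h0
    apply ha
    rw [rowQ_eq hfin, h0]
    simp
  rw [fs_univ _ hrowQ, eulZ_eq_sum hfin (le_refl _)]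
  push_cast
  apply Finset.sum_congr rfl
  intro a _
  rw [rowQ_eq hfin, ← sgn_cast]
  try push_cast
  try ring
end tables

section tables2
variable {u : ℤ → ℤ → ℕ} (hfin : (Function.support fun x : ℤ × ℤ => u x.1 x.2).Finite)
include hfin

lemma rowS_eq_zero_of_not_mem {i : ℤ} (h : i ∉ hfin.toFinset.image Prod.fst) :
    rowS u i = 0 := by
  by_contra hc
  obtain ⟨m, hm⟩ := rowS_ne_zero hc
  exact h (Finset.mem_image.2 ⟨(i, m), Set.Finite.mem_toFinset _ |>.2 hm, rfl⟩)

lemma tailZ_rec (i : ℤ) : tailZ u i = (rowS u i : ℤ) - tailZ u (i + 1) := by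
  classical
  set F := hfin.toFinset.image Prod.fst with hF
  rw [tailZ_eq_sum hfin (le_refl F) i, tailZ_eq_sum hfin (le_refl F) (i+1)]
  have hterm : ∀ p ∈ F.filter (i+1 ≤ ·),
      sgn (p - (i+1)) * (rowS u p : ℤ) = -(sgn (p - i) * (rowS u p : ℤ)) := by
    intro p _
    rw [show p - i = (p - (i+1)) + 1 by ring, sgn_add_one]
    ring
  rw [Finset.sum_congr rfl hterm, Finset.sum_neg_distrib]
  by_cases hi : i ∈ F
  · have hsplit : F.filter (i ≤ ·) = insert i (F.filter (i+1 ≤ ·)) := by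
      ext x
      simp only [Finset.mem_filter, Finset.mem_insert]
      constructor
      · rintro ⟨hx, hix⟩
        rcases eq_or_ne x i with rfl | hne
        · exact Or.inl rfl
        · exact Or.inr ⟨hx, by omega⟩
      · rintro (rfl | ⟨hx, hix⟩)
        · exact ⟨hi, le_refl _⟩
        · exact ⟨hx, by omega⟩
    rw [hsplit, Finset.sum_insert (by simp only [Finset.mem_filter]; push_neg; intro _; omega)]
    have : sgn (i - i) = 1 := by simp [sgn]
    rw [show i - i = 0 by ring] at this
    rw [show i - i = 0 by ring, this]
    ring
  · have hS : rowS u i = 0 := rowS_eq_zero_of_not_mem hfin hi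
    have hsplit : F.filter (i ≤ ·) = F.filter (i+1 ≤ ·) := by
      ext x
      simp only [Finset.mem_filter]
      constructor
      · rintro ⟨hx, hix⟩
        refine ⟨hx, ?_⟩
        rcases eq_or_ne x i with rfl | hne
        · exact absurd hx hi
        · omega
      · rintro ⟨hx, hix⟩
        exact ⟨hx, by omega⟩
    rw [hsplit, hS]
    push_cast
    ring

lemma cnt_bot {i j : ℤ} (h : ∀ m ∈ hfin.toFinset.image Prod.snd, ¬ m ≤ j) :
    cnt u i j = 0 := by
  rw [cnt_eq_sum hfin (le_refl _)]
  rw [Finset.filter_false_of_mem h, Finset.sum_empty]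

lemma tailZ_nonneg (hchi : ∀ i j : ℤ, 0 ≤ chiZ u i j) (i : ℤ) : 0 ≤ tailZ u i := by
  set E := hfin.toFinset.image Prod.snd with hE
  set K : ℕ := E.sup (fun m => m.natAbs) with hK
  set j0 : ℤ := -(K : ℤ) - 2 with hj0
  have hbound : ∀ m ∈ E, -(K:ℤ) ≤ m := by
    intro m hm
    have h := Finset.le_sup (f := fun m : ℤ => m.natAbs) hm
    omega
  have h1 : cnt u (i-2) j0 = 0 := cnt_bot hfin (by intro m hm; have := hbound m hm; omega)
  have h2 : cnt u (i-1) (j0+1) = 0 := cnt_bot hfin (by intro m hm; have := hbound m hm; omega)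
  have h3 := hchi (i-2) j0
  rw [chiZ, show i - 2 + 1 = i - 1 by ring, show i - 2 + 2 = i by ring, h1, h2] at h3
  simpa using h3

lemma cnt_le_rowS (i j : ℤ) : cnt u i j ≤ rowS u i := by
  rw [cnt_eq_sum hfin (le_refl _), rowS_eq_sum hfin (le_refl _)]
  exact Finset.sum_le_sum_of_subset (Finset.filter_subset _ _)

lemma cnt_mono (i : ℤ) {j j' : ℤ} (h : j ≤ j') : cnt u i j ≤ cnt u i j' := by
  rw [cnt_eq_sum hfin (le_refl _), cnt_eq_sum hfin (le_refl _)]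
  apply Finset.sum_le_sum_of_subset
  intro x
  simp only [Finset.mem_filter]
  rintro ⟨h1, h2⟩
  exact ⟨h1, le_trans h2 h⟩

lemma cnt_pos_of (i : ℤ) {m j : ℤ} (hm : u i m ≠ 0) (hmj : m ≤ j) : 1 ≤ cnt u i j := by
  rw [cnt_eq_sum hfin (le_refl _)]
  have hmem : m ∈ (hfin.toFinset.image Prod.snd).filter (· ≤ j) := by
    refine Finset.mem_filter.2 ⟨?_, hmj⟩
    exact Finset.mem_image.2 ⟨(i, m), Set.Finite.mem_toFinset _ |>.2 hm, rfl⟩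
  calc 1 ≤ u i m := Nat.one_le_iff_ne_zero.2 hm
  _ ≤ _ := Finset.single_le_sum (fun _ _ => Nat.zero_le _) hmem

omit hfin in
lemma exists_of_cnt_pos {i j : ℤ} (h : 1 ≤ cnt u i j) : ∃ m ≤ j, u i m ≠ 0 := by
  by_contra hc
  push_neg at hc
  have : cnt u i j = 0 := by
    rw [cnt]
    exact finsum_mem_eq_zero_of_forall_eq_zero fun m hm => hc m hm
  omega

lemma rowS_pos_of (i : ℤ) {m : ℤ} (hm : u i m ≠ 0) : 1 ≤ rowS u i := by
  rw [rowS_eq_sum hfin (le_refl _)]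
  have hmem : m ∈ hfin.toFinset.image Prod.snd :=
    Finset.mem_image.2 ⟨(i, m), Set.Finite.mem_toFinset _ |>.2 hm, rfl⟩
  calc 1 ≤ u i m := Nat.one_le_iff_ne_zero.2 hm
  _ ≤ _ := Finset.single_le_sum (fun _ _ => Nat.zero_le _) hmem

lemma cnt_eq_rowS {i j : ℤ} (h : ∀ m, u i m ≠ 0 → m ≤ j) : cnt u i j = rowS u i := by
  rw [cnt_eq_sum hfin (le_refl _), rowS_eq_sum hfin (le_refl _)]
  apply Finset.sum_subset (Finset.filter_subset _ _)
  intro x hxE hx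
  simp only [Finset.mem_filter, not_and, not_le] at hx
  by_contra hne
  exact absurd (h x hne) (by have := hx hxE; omega)

end tables2

section add
variable {u v w : ℤ → ℤ → ℕ}
  (hv : (Function.support fun x : ℤ × ℤ => v x.1 x.2).Finite)
  (hw : (Function.support fun x : ℤ × ℤ => w x.1 x.2).Finite)
  (hvw : ∀ i j, u i j = v i j + w i j)
include hv hw hvw

lemma fin_add : (Function.support fun x : ℤ × ℤ => u x.1 x.2).Finite := by
  apply (hv.union hw).subset
  intro x hx
  simp only [mem_support, Set.mem_union, ne_eq] at *
  rw [hvw] at hx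
  omega

lemma cnt_add (i j : ℤ) : cnt u i j = cnt v i j + cnt w i j := by
  classical
  set E := (hv.toFinset.image Prod.snd) ∪ (hw.toFinset.image Prod.snd) with hE
  have hEu : (fin_add hv hw hvw).toFinset.image Prod.snd ⊆ E := by
    intro m hm
    obtain ⟨x, hx1, rfl⟩ := Finset.mem_image.1 hm
    have hx : u x.1 x.2 ≠ 0 := by simpa using hx1
    rw [hvw] at hx
    rcases Nat.eq_zero_or_pos (v x.1 x.2) with h0 | h0
    · exact Finset.mem_union_right _ (Finset.mem_image.2 ⟨x, by simp; omega, rfl⟩)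
    · exact Finset.mem_union_left _ (Finset.mem_image.2 ⟨x, by simp; omega, rfl⟩)
  rw [cnt_eq_sum (fin_add hv hw hvw) hEu, cnt_eq_sum hv Finset.subset_union_left,
    cnt_eq_sum hw Finset.subset_union_right, ← Finset.sum_add_distrib]
  exact Finset.sum_congr rfl fun m _ => hvw i m

lemma rowS_add (i : ℤ) : rowS u i = rowS v i + rowS w i := by
  classical
  set E := (hv.toFinset.image Prod.snd) ∪ (hw.toFinset.image Prod.snd) with hE
  have hEu : (fin_add hv hw hvw).toFinset.image Prod.snd ⊆ E := by
    intro m hm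
    obtain ⟨x, hx1, rfl⟩ := Finset.mem_image.1 hm
    have hx : u x.1 x.2 ≠ 0 := by simpa using hx1
    rw [hvw] at hx
    rcases Nat.eq_zero_or_pos (v x.1 x.2) with h0 | h0
    · exact Finset.mem_union_right _ (Finset.mem_image.2 ⟨x, by simp; omega, rfl⟩)
    · exact Finset.mem_union_left _ (Finset.mem_image.2 ⟨x, by simp; omega, rfl⟩)
  rw [rowS_eq_sum (fin_add hv hw hvw) hEu, rowS_eq_sum hv Finset.subset_union_left,
    rowS_eq_sum hw Finset.subset_union_right, ← Finset.sum_add_distrib]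
  exact Finset.sum_congr rfl fun m _ => hvw i m

lemma tailZ_add (i : ℤ) : tailZ u i = tailZ v i + tailZ w i := by
  classical
  set F := (hv.toFinset.image Prod.fst) ∪ (hw.toFinset.image Prod.fst) with hF
  have hFu : (fin_add hv hw hvw).toFinset.image Prod.fst ⊆ F := by
    intro m hm
    obtain ⟨x, hx1, rfl⟩ := Finset.mem_image.1 hm
    have hx : u x.1 x.2 ≠ 0 := by simpa using hx1
    rw [hvw] at hx
    rcases Nat.eq_zero_or_pos (v x.1 x.2) with h0 | h0
    · exact Finset.mem_union_right _ (Finset.mem_image.2 ⟨x, by simp; omega, rfl⟩)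
    · exact Finset.mem_union_left _ (Finset.mem_image.2 ⟨x, by simp; omega, rfl⟩)
  rw [tailZ_eq_sum (fin_add hv hw hvw) hFu, tailZ_eq_sum hv Finset.subset_union_left,
    tailZ_eq_sum hw Finset.subset_union_right, ← Finset.sum_add_distrib]
  apply Finset.sum_congr rfl
  intro p _
  rw [rowS_add hv hw hvw]
  push_cast
  ring

lemma chiZ_add (i j : ℤ) : chiZ u i j = chiZ v i j + chiZ w i j := by
  rw [chiZ, chiZ, chiZ, cnt_add hv hw hvw, cnt_add hv hw hvw, tailZ_add hv hw hvw]
  push_cast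
  ring

lemma eulZ_add : eulZ u = eulZ v + eulZ w := by
  classical
  set F := (hv.toFinset.image Prod.fst) ∪ (hw.toFinset.image Prod.fst) with hF
  have hFu : (fin_add hv hw hvw).toFinset.image Prod.fst ⊆ F := by
    intro m hm
    obtain ⟨x, hx1, rfl⟩ := Finset.mem_image.1 hm
    have hx : u x.1 x.2 ≠ 0 := by simpa using hx1
    rw [hvw] at hx
    rcases Nat.eq_zero_or_pos (v x.1 x.2) with h0 | h0
    · exact Finset.mem_union_right _ (Finset.mem_image.2 ⟨x, by simp; omega, rfl⟩)
    · exact Finset.mem_union_left _ (Finset.mem_image.2 ⟨x, by simp; omega, rfl⟩)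
  rw [eulZ_eq_sum (fin_add hv hw hvw) hFu, eulZ_eq_sum hv Finset.subset_union_left,
    eulZ_eq_sum hw Finset.subset_union_right, ← Finset.sum_add_distrib]
  apply Finset.sum_congr rfl
  intro p _
  rw [rowS_add hv hw hvw]
  push_cast
  ring

lemma massZ_add : massZ u = massZ v + massZ w := by
  classical
  set G := hv.toFinset ∪ hw.toFinset with hG
  have hGu : (fin_add hv hw hvw).toFinset ⊆ G := by
    intro x hx
    have hx' : u x.1 x.2 ≠ 0 := by simpa using hx
    rw [hvw] at hx'
    rcases Nat.eq_zero_or_pos (v x.1 x.2) with h0 | h0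
    · exact Finset.mem_union_right _ (by simp; omega)
    · exact Finset.mem_union_left _ (by simp; omega)
  rw [massZ_eq_sum (fin_add hv hw hvw) hGu, massZ_eq_sum hv Finset.subset_union_left,
    massZ_eq_sum hw Finset.subset_union_right, ← Finset.sum_add_distrib]
  exact Finset.sum_congr rfl fun m _ => hvw m.1 m.2
end add

section dom
def dom (s p p' : ℤ) : ℤ → ℤ → ℕ := fun i j =>
  (if i = s ∧ j = p then 1 else 0) + (if i = s + 1 ∧ j = p' then 1 else 0)

variable {s p p' : ℤ} (hpp' : p < p')

lemma dom_fin : (Function.support fun x : ℤ × ℤ => dom s p p' x.1 x.2).Finite := by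
  apply Set.Finite.subset (Set.Finite.insert (s, p) (Set.finite_singleton (s + 1, p')))
  intro x hx
  simp only [mem_support, dom, ne_eq] at hx
  by_contra hc
  simp only [Set.mem_insert_iff, Set.mem_singleton_iff] at hc
  push_neg at hc
  obtain ⟨h1, h2⟩ := hc
  have e1 : ¬(x.1 = s ∧ x.2 = p) := by
    intro ⟨a, b⟩; exact h1 (Prod.ext a b)
  have e2 : ¬(x.1 = s + 1 ∧ x.2 = p') := by
    intro ⟨a, b⟩; exact h2 (Prod.ext a b)
  rw [if_neg e1, if_neg e2] at hx
  exact hx rfl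

lemma support_dom_row (i : ℤ) : Function.support (dom s p p' i) ⊆ ↑({p, p'} : Finset ℤ) := by
  intro m hm
  simp only [mem_support, dom, ne_eq] at hm
  simp only [Finset.coe_insert, Finset.coe_singleton, Set.mem_insert_iff, Set.mem_singleton_iff]
  by_contra hc
  push_neg at hc
  rw [if_neg (by tauto), if_neg (by tauto)] at hm
  exact hm rfl

include hpp'

lemma cnt_dom (i j : ℤ) : cnt (dom s p p') i j =
    (if i = s ∧ p ≤ j then 1 else 0) + (if i = s + 1 ∧ p' ≤ j then 1 else 0) := by
  rw [cnt, fs_Iic _ (support_dom_row i) j, Finset.sum_filter,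
    Finset.sum_pair (by omega : p ≠ p')]
  simp only [dom, and_true, true_and, eq_self_iff_true]
  split_ifs <;> omega

lemma rowS_dom (i : ℤ) : rowS (dom s p p') i =
    (if i = s then 1 else 0) + (if i = s + 1 then 1 else 0) := by
  rw [rowS, fs_univ _ (support_dom_row i), Finset.sum_pair (by omega : p ≠ p')]
  simp only [dom, and_true, true_and, eq_self_iff_true]
  split_ifs <;> omega

lemma support_dom_rowS (k : ℤ) :
    Function.support (fun r => sgn (r - k) * (rowS (dom s p p') r : ℤ)) ⊆
      ↑({s, s + 1} : Finset ℤ) := by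
  intro r hr
  simp only [mem_support, ne_eq] at hr
  simp only [Finset.coe_insert, Finset.coe_singleton, Set.mem_insert_iff, Set.mem_singleton_iff]
  by_contra hc
  push_neg at hc
  apply hr
  rw [rowS_dom hpp', if_neg hc.1, if_neg hc.2]
  simp

lemma tailZ_dom (i : ℤ) : tailZ (dom s p p') i = if i = s + 1 then 1 else 0 := by
  rw [tailZ, fs_Ici _ (support_dom_rowS hpp' i) i, Finset.sum_filter,
    Finset.sum_pair (by omega : s ≠ s + 1), rowS_dom hpp', rowS_dom hpp']
  rw [if_pos rfl, if_neg (by omega : ¬ s = s + 1), if_pos rfl,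
    if_neg (by omega : ¬ s + 1 = s)]
  rcases le_or_gt i s with h | h
  · rw [if_pos h, if_pos (by omega : i ≤ s + 1), if_neg (by omega : ¬ i = s + 1)]
    rw [show s + 1 - i = (s - i) + 1 by ring, sgn_add_one]
    ring
  · rcases eq_or_lt_of_le (by omega : s + 1 ≤ i) with h2 | h2
    · subst h2
      rw [if_neg (by omega), if_pos (by omega), if_pos rfl,
        show s + 1 - (s + 1) = 0 by ring]
      simp [sgn]
    · rw [if_neg (by omega), if_neg (by omega), if_neg (by omega)]
      ring

lemma chiZ_dom (i j : ℤ) : chiZ (dom s p p') i j =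
    (if i = s ∧ p ≤ j ∧ j + 1 < p' then 1 else 0) +
    (if i = s - 1 ∧ j + 1 < p then 1 else 0) +
    (if i = s + 1 ∧ p' ≤ j then 1 else 0) := by
  rw [chiZ, cnt_dom hpp', cnt_dom hpp', tailZ_dom hpp']
  split_ifs <;> push_cast <;> omega

lemma eulZ_dom : eulZ (dom s p p') = 0 := by
  have hsup : Function.support (fun r => sgn r * (rowS (dom s p p') r : ℤ)) ⊆
      ↑({s, s + 1} : Finset ℤ) := by
    intro r hr
    simp only [mem_support, ne_eq] at hr
    simp only [Finset.coe_insert, Finset.coe_singleton, Set.mem_insert_iff,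
      Set.mem_singleton_iff]
    by_contra hc
    push_neg at hc
    apply hr
    rw [rowS_dom hpp', if_neg hc.1, if_neg hc.2]
    simp
  rw [eulZ, fs_univ _ hsup, Finset.sum_pair (by omega : s ≠ s + 1), rowS_dom hpp',
    rowS_dom hpp', if_pos rfl, if_neg (by omega : ¬ s = s + 1), if_pos rfl,
    if_neg (by omega : ¬ s + 1 = s), sgn_add_one]
  push_cast
  ring

omit hpp' in
lemma massZ_dom : massZ (dom s p p') = 2 := by
  have hsub : (dom_fin (s := s) (p := p) (p' := p')).toFinset ⊆
      ({(s, p), (s + 1, p')} : Finset (ℤ × ℤ)) := by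
    intro x hx
    have hx' : dom s p p' x.1 x.2 ≠ 0 := by simpa using hx
    simp only [dom, ne_eq] at hx'
    simp only [Finset.mem_insert, Finset.mem_singleton]
    by_contra hc
    push_neg at hc
    obtain ⟨h1, h2⟩ := hc
    rw [if_neg (by intro ⟨a, b⟩; exact h1 (Prod.ext a b)),
      if_neg (by intro ⟨a, b⟩; exact h2 (Prod.ext a b))] at hx'
    exact hx' rfl
  rw [massZ_eq_sum dom_fin hsub, Finset.sum_pair (by
    intro hc
    have := congrArg Prod.fst hc
    simp at this : ((s, p) : ℤ × ℤ) ≠ (s + 1, p'))]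
  simp only [dom, and_true, true_and, eq_self_iff_true]
  split_ifs <;> omega
end dom

theorem aux (N : ℕ) : ∀ (u : ℤ → ℤ → ℕ)
    (hfin : (Function.support fun x : ℤ × ℤ => u x.1 x.2).Finite),
    (∀ i j : ℤ, 0 ≤ chiZ u i j) → eulZ u = 0 → massZ u = N →
    ∃ (m : ℕ) (s p q : Fin m → ℤ) (c : Fin m → ℕ),
      (∀ t, 1 ≤ q t) ∧ (∀ t, 0 < c t) ∧
      ∀ i j : ℤ, u i j = ∑ t : Fin m, c t *
        ((if i = s t ∧ j = p t then 1 else 0) +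
          (if i = s t + 1 ∧ j = p t + q t then 1 else 0)) := by
  induction N using Nat.strong_induction_on with
  | _ N ih =>
  intro u hfin hchi heul hmass
  classical
  by_cases hne : hfin.toFinset.Nonempty
  swap
  · -- u is identically zero
    have hz : ∀ i j : ℤ, u i j = 0 := by
      intro i j
      by_contra h
      exact hne ⟨(i, j), (Set.Finite.mem_toFinset _).2 h⟩
    exact ⟨0, Fin.elim0, Fin.elim0, Fin.elim0, Fin.elim0,
      fun t => t.elim0, fun t => t.elim0, fun i j => by simp [hz]⟩
  -- the lowest nonzero row s
  set F := hfin.toFinset.image Prod.fst with hF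
  have hFne : F.Nonempty := hne.image _
  set s := F.min' hFne with hs
  have hFmem : ∀ i m : ℤ, u i m ≠ 0 → i ∈ F := by
    intro i m h
    exact Finset.mem_image.2 ⟨(i, m), (Set.Finite.mem_toFinset _).2 h, rfl⟩
  have hrowlow : ∀ i m : ℤ, i < s → u i m = 0 := by
    intro i m hi
    by_contra h
    exact absurd (F.min'_le i (hFmem i m h)) (by omega)
  -- leftmost entry p of row s
  set E1 := (hfin.toFinset.filter (fun x => x.1 = s)).image Prod.snd with hE1
  have hE1iff : ∀ m : ℤ, m ∈ E1 ↔ u s m ≠ 0 := by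
    intro m
    constructor
    · intro h
      obtain ⟨x, hx, rfl⟩ := Finset.mem_image.1 h
      obtain ⟨hx1, hx2⟩ := Finset.mem_filter.1 hx
      have : u x.1 x.2 ≠ 0 := by simpa using hx1
      rwa [hx2] at this
    · intro h
      exact Finset.mem_image.2 ⟨(s, m),
        Finset.mem_filter.2 ⟨(Set.Finite.mem_toFinset _).2 h, rfl⟩, rfl⟩
  have hE1ne : E1.Nonempty := by
    obtain ⟨x0, hx0⟩ := hne
    have hsF := F.min'_mem hFne
    obtain ⟨x1, hx1, hx1s⟩ := Finset.mem_image.1 hsF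
    refine ⟨x1.2, (hE1iff _).2 ?_⟩
    have : u x1.1 x1.2 ≠ 0 := by simpa using hx1
    rwa [hx1s] at this
  set p := E1.min' hE1ne with hp
  have hup : u s p ≠ 0 := (hE1iff _).1 (E1.min'_mem hE1ne)
  have hpmin : ∀ m : ℤ, u s m ≠ 0 → p ≤ m := fun m hm => E1.min'_le m ((hE1iff m).2 hm)
  -- the key tail quantities
  set n := tailZ u (s + 2) with hn
  have hn0 : 0 ≤ n := tailZ_nonneg hfin hchi _
  have hn3 : 0 ≤ tailZ u (s + 3) := tailZ_nonneg hfin hchi _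
  have hTs : tailZ u s = 0 := by
    rw [tailZ_eq_sum hfin (le_refl F) s,
      Finset.filter_true_of_mem (fun i hi => F.min'_le i hi)]
    have heul' : ∑ a ∈ F, sgn a * (rowS u a : ℤ) = 0 := by
      rw [← eulZ_eq_sum hfin (le_refl F)]
      exact heul
    have : ∑ a ∈ F, sgn (a - s) * (rowS u a : ℤ)
        = sgn s * ∑ a ∈ F, sgn a * (rowS u a : ℤ) := by
      rw [Finset.mul_sum]
      apply Finset.sum_congr rfl
      intro a _
      rw [sgn_sub]
      ring
    rw [this, heul', mul_zero]
  have hTs1 : tailZ u (s + 1) = (rowS u s : ℤ) := by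
    have h := tailZ_rec hfin s
    rw [hTs] at h
    linarith
  have hSs : 1 ≤ (rowS u s : ℤ) := by exact_mod_cast rowS_pos_of hfin s hup
  have hS1 : (rowS u (s + 1) : ℤ) = (rowS u s : ℤ) + n := by
    have h := tailZ_rec hfin (s + 1)
    rw [hTs1, show s + 1 + 1 = s + 2 by ring, ← hn] at h
    linarith
  have hS2 : (rowS u (s + 2) : ℤ) = n + tailZ u (s + 3) := by
    have h := tailZ_rec hfin (s + 2)
    rw [show s + 2 + 1 = s + 3 by ring, ← hn] at h
    linarith
  -- row s+1 columns
  set E2 := (hfin.toFinset.filter (fun x => x.1 = s + 1)).image Prod.snd with hE2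
  have hE2iff : ∀ m : ℤ, m ∈ E2 ↔ u (s + 1) m ≠ 0 := by
    intro m
    constructor
    · intro h
      obtain ⟨x, hx, rfl⟩ := Finset.mem_image.1 h
      obtain ⟨hx1, hx2⟩ := Finset.mem_filter.1 hx
      have : u x.1 x.2 ≠ 0 := by simpa using hx1
      rwa [hx2] at this
    · intro h
      exact Finset.mem_image.2 ⟨(s + 1, m),
        Finset.mem_filter.2 ⟨(Set.Finite.mem_toFinset _).2 h, rfl⟩, rfl⟩
  have hE2ne : E2.Nonempty := by
    have h1 : rowS u (s + 1) ≠ 0 := by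
      intro h0
      rw [h0] at hS1
      simp at hS1
      omega
    obtain ⟨m, hm⟩ := rowS_ne_zero h1
    exact ⟨m, (hE2iff m).2 hm⟩
  set D := E2.filter (fun c => n + 1 ≤ (cnt u (s + 1) c : ℤ)) with hD
  have hDne : D.Nonempty := by
    refine ⟨E2.max' hE2ne, Finset.mem_filter.2 ⟨E2.max'_mem hE2ne, ?_⟩⟩
    have hcr : cnt u (s + 1) (E2.max' hE2ne) = rowS u (s + 1) :=
      cnt_eq_rowS hfin (fun m hm => E2.le_max' m ((hE2iff m).2 hm))
    rw [hcr, hS1]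
    linarith
  set p' := D.min' hDne with hp'
  have hp'D := D.min'_mem hDne
  have hup' : u (s + 1) p' ≠ 0 := (hE2iff _).1 (Finset.mem_filter.1 hp'D).1
  have hcntp' : n + 1 ≤ (cnt u (s + 1) p' : ℤ) := (Finset.mem_filter.1 hp'D).2
  -- counts below p' are at most n
  have hsmall : ∀ c : ℤ, c < p' → (cnt u (s + 1) c : ℤ) ≤ n := by
    intro c hc
    by_contra hgt
    push_neg at hgt
    have hge : n + 1 ≤ (cnt u (s + 1) c : ℤ) := by omega
    have hpos : 1 ≤ cnt u (s + 1) c := by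
      have : (1 : ℤ) ≤ (cnt u (s + 1) c : ℤ) := by omega
      exact_mod_cast this
    obtain ⟨m, hm1, hm2⟩ := exists_of_cnt_pos hpos
    have hmE2 : m ∈ E2.filter (· ≤ c) :=
      Finset.mem_filter.2 ⟨(hE2iff m).2 hm2, hm1⟩
    have hne2 : (E2.filter (· ≤ c)).Nonempty := ⟨m, hmE2⟩
    set c'' := (E2.filter (· ≤ c)).max' hne2 with hc''
    have hc''le : c'' ≤ c := (Finset.mem_filter.1 ((E2.filter (· ≤ c)).max'_mem hne2)).2
    have hc''E2 : c'' ∈ E2 := (Finset.mem_filter.1 ((E2.filter (· ≤ c)).max'_mem hne2)).1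
    -- cnt at c equals cnt at c''
    have hcc : cnt u (s + 1) c = cnt u (s + 1) c'' := by
      rw [cnt_eq_sum hfin (le_refl _), cnt_eq_sum hfin (le_refl _)]
      apply (Finset.sum_subset ?_ ?_).symm
      · intro x hx
        obtain ⟨hx1, hx2⟩ := Finset.mem_filter.1 hx
        exact Finset.mem_filter.2 ⟨hx1, by omega⟩
      · intro x hx1 hx2
        obtain ⟨hx1', hx1''⟩ := Finset.mem_filter.1 hx1
        simp only [Finset.mem_filter, not_and, not_le] at hx2
        have hxgt : c'' < x := hx2 hx1'
        by_contra hxe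
        have hxE2 : x ∈ E2.filter (· ≤ c) :=
          Finset.mem_filter.2 ⟨(hE2iff x).2 hxe, hx1''⟩
        exact absurd ((E2.filter (· ≤ c)).le_max' x hxE2) (by omega)
    have hcD : c'' ∈ D := Finset.mem_filter.2 ⟨hc''E2, by rw [← hcc]; exact hge⟩
    exact absurd (D.min'_le c'' hcD) (by omega)
  -- p < p'
  have hple : p < p' := by
    have h := hchi s (p' - 1)
    rw [chiZ, show p' - 1 + 1 = p' by ring] at h
    have h1 : (1 : ℤ) ≤ (cnt u s (p' - 1) : ℤ) := by rw [← hn] at h; omega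
    have h1' : 1 ≤ cnt u s (p' - 1) := by exact_mod_cast h1
    obtain ⟨m, hm1, hm2⟩ := exists_of_cnt_pos h1'
    have := hpmin m hm2
    omega
  -- the domino and the remainder
  set u' : ℤ → ℤ → ℕ := fun i j => u i j - dom s p p' i j with hu'
  have hdle : ∀ i j : ℤ, dom s p p' i j ≤ u i j := by
    intro i j
    by_cases hA : i = s ∧ j = p
    · obtain ⟨hA1, hA2⟩ := hA
      have hne0 : u i j ≠ 0 := by rw [hA1, hA2]; exact hup
      simp only [dom]
      rw [if_pos ⟨hA1, hA2⟩, if_neg (by omega : ¬(i = s + 1 ∧ j = p'))]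
      omega
    · by_cases hB : i = s + 1 ∧ j = p'
      · obtain ⟨hB1, hB2⟩ := hB
        have hne0 : u i j ≠ 0 := by rw [hB1, hB2]; exact hup'
        simp only [dom]
        rw [if_neg hA, if_pos ⟨hB1, hB2⟩]
        omega
      · simp only [dom]
        rw [if_neg hA, if_neg hB]
        omega
  have hvw : ∀ i j : ℤ, u i j = u' i j + dom s p p' i j := by
    intro i j
    have := hdle i j
    simp only [hu']
    omega
  have hfin' : (Function.support fun x : ℤ × ℤ => u' x.1 x.2).Finite := by
    apply hfin.subset
    intro x hx
    simp only [Function.mem_support, ne_eq, hu'] at hx ⊢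
    omega
  have hfind : (Function.support fun x : ℤ × ℤ => dom s p p' x.1 x.2).Finite := dom_fin
  -- the three strict chi inequalities
  have hca : ∀ j : ℤ, j + 1 < p → 1 ≤ chiZ u (s - 1) j := by
    intro j hj
    have hc1 : cnt u (s - 1) j = 0 := by
      by_contra h0
      obtain ⟨m, _, hm2⟩ := exists_of_cnt_pos (by omega : 1 ≤ cnt u (s - 1) j)
      exact hm2 (hrowlow _ _ (by omega))
    have hc2 : cnt u s (j + 1) = 0 := by
      by_contra h0
      obtain ⟨m, hm1, hm2⟩ := exists_of_cnt_pos (by omega : 1 ≤ cnt u s (j + 1))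
      have := hpmin m hm2
      omega
    rw [chiZ, show s - 1 + 1 = s by ring, show s - 1 + 2 = s + 1 by ring, hc1, hc2, hTs1]
    simp only [Nat.cast_zero]
    linarith
  have hcc : ∀ j : ℤ, p ≤ j → j + 1 < p' → 1 ≤ chiZ u s j := by
    intro j hj1 hj2
    have hc1 : (1 : ℤ) ≤ (cnt u s j : ℤ) := by exact_mod_cast cnt_pos_of hfin s hup hj1
    have hc2 : (cnt u (s + 1) (j + 1) : ℤ) ≤ n := hsmall _ hj2
    rw [chiZ, ← hn]
    omega
  have hcb : ∀ j : ℤ, p' ≤ j → 1 ≤ chiZ u (s + 1) j := by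
    intro j hj
    have hc1 : (cnt u (s + 1) p' : ℤ) ≤ (cnt u (s + 1) j : ℤ) := by
      exact_mod_cast cnt_mono hfin (s + 1) hj
    have hc2 : (cnt u (s + 2) (j + 1) : ℤ) ≤ (rowS u (s + 2) : ℤ) := by
      exact_mod_cast cnt_le_rowS hfin (s + 2) (j + 1)
    rw [chiZ, show s + 1 + 1 = s + 2 by ring, show s + 1 + 2 = s + 3 by ring]
    omega
  -- chi of the remainder is nonnegative
  have hchi' : ∀ i j : ℤ, 0 ≤ chiZ u' i j := by
    intro i j
    have hadd := chiZ_add hfin' hfind hvw i j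
    have hdval := chiZ_dom (s := s) hple i j
    by_cases h1 : i = s ∧ p ≤ j ∧ j + 1 < p'
    · obtain ⟨rfl, h1b, h1c⟩ := h1
      rw [if_pos ⟨rfl, h1b, h1c⟩, if_neg (by omega), if_neg (by omega)] at hdval
      have := hcc j h1b h1c
      omega
    · by_cases h2 : i = s - 1 ∧ j + 1 < p
      · obtain ⟨rfl, h2b⟩ := h2
        rw [if_neg (by omega), if_pos ⟨rfl, h2b⟩, if_neg (by omega)] at hdval
        have := hca j h2b
        omega
      · by_cases h3 : i = s + 1 ∧ p' ≤ j
        · obtain ⟨rfl, h3b⟩ := h3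
          rw [if_neg (by omega), if_neg (by omega), if_pos ⟨rfl, h3b⟩] at hdval
          have := hcb j h3b
          omega
        · rw [if_neg h1, if_neg h2, if_neg h3] at hdval
          have := hchi i j
          omega
  have heul' : eulZ u' = 0 := by
    have h := eulZ_add hfin' hfind hvw
    rw [eulZ_dom hple] at h
    omega
  have hmass' : massZ u = massZ u' + 2 := by
    have h := massZ_add hfin' hfind hvw
    rwa [massZ_dom] at h
  have hlt : massZ u' < N := by omega
  obtain ⟨m, sv, pv, qv, cv, hq, hc, hrep⟩ := ih (massZ u') hlt u' hfin' hchi' heul' rfl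
  refine ⟨m + 1, Fin.cons s sv, Fin.cons p pv, Fin.cons (p' - p) qv, Fin.cons 1 cv,
    ?_, ?_, ?_⟩
  · intro t
    induction t using Fin.cases with
    | zero => simp only [Fin.cons_zero]; omega
    | succ k => simpa using hq k
  · intro t
    induction t using Fin.cases with
    | zero => simp only [Fin.cons_zero]; omega
    | succ k => simpa using hc k
  · intro i j
    rw [Fin.sum_univ_succ]
    simp only [Fin.cons_zero, Fin.cons_succ, one_mul]
    have hd : dom s p p' i j =
        (if i = s ∧ j = p then 1 else 0) + (if i = s + 1 ∧ j = p + (p' - p) then 1 else 0) := by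
      simp only [dom]
      rw [show p + (p' - p) = p' by ring]
    rw [hvw i j, hrep i j, hd]
    ring


/-- **Integral decomposition over `A = k[t]`.** A finitely supported table of
nonnegative integers on which all the functionals `χ_{i,j}` are nonnegative and whose
total Euler characteristic vanishes is a finite positive integral combination of the
two-entry Betti tables of shifted resolutions of the cyclic torsion modules
`A(-p)/(t^q)` (entry `1` at `(s,p)` and at `(s+1, p+q)`, with `q ≥ 1`). -/
theorem table_decomposes_into_cyclic_tables (u : ℤ → ℤ → ℕ)
    (hfin : (Function.support fun x : ℤ × ℤ => u x.1 x.2).Finite)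
    (hchi : ∀ i j : ℤ, 0 ≤ chiFunctional (fun a b => (u a b : ℚ)) i j)
    (heuler : ∑ᶠ a : ℤ, (-1 : ℚ) ^ a * ∑ᶠ b : ℤ, (u a b : ℚ) = 0) :
    ∃ (m : ℕ) (s p q : Fin m → ℤ) (c : Fin m → ℕ),
      (∀ t, 1 ≤ q t) ∧ (∀ t, 0 < c t) ∧
      ∀ i j : ℤ, u i j = ∑ t : Fin m, c t *
        ((if i = s t ∧ j = p t then 1 else 0) +
          (if i = s t + 1 ∧ j = p t + q t then 1 else 0)) := by
  have h1 : ∀ i j : ℤ, 0 ≤ chiZ u i j := by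
    intro i j
    have h := hchi i j
    rw [chi_conv hfin] at h
    exact_mod_cast h
  have h2 : eulZ u = 0 := by
    have h := heuler
    rw [eul_conv hfin] at h
    exact_mod_cast h
  exact aux (massZ u) u hfin h1 h2 rfl
end

section
/- Let u = (u_{i,j}) be a finitely supported table of nonnegative rationals over A = k[t] lying in the cone B of Betti tables of bounded free complexes with torsion homology (i.e., u satisfies u_{i,j} ≥ 0 for all i,j, χ_{i,j}(u) ≥ 0 for all i,j, and Σ(-1)^i u_{i,j} = 0). Then the decomposition of u as a positive rational combination of two-entry pure tables T_{s,p,q} (entry 1 at (s,p) and (s+1, p+q)) whose associated degree sequences form a chain is unique. -/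
/-- The two-entry pure table `T_{s,p,q}`: the Betti table of the shifted resolution of
`A(-p)/(t^q)` in homological degrees `s, s+1`, with entries `1` at `(s,p)` and
`(s+1, p+q)`. Here `t = (s, p, q)`. -/
noncomputable def cyclicTable (t : ℤ × ℤ × ℤ) : ℤ → ℤ → ℚ := fun i j =>
  (if i = t.1 ∧ j = t.2.1 then 1 else 0) +
    (if i = t.1 + 1 ∧ j = t.2.1 + t.2.2 then 1 else 0)

/-- The degree sequence associated to the triple `t = (s,p,q)`: entries `p` at
position `s`, `p+q` at position `s+1`, `-∞` to the left and `+∞` to the right. -/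
def cyclicDegSeq (t : ℤ × ℤ × ℤ) : ℤ → WithBot (WithTop ℤ) := fun i =>
  if i < t.1 then ⊥
  else if i = t.1 then ((t.2.1 : WithTop ℤ) : WithBot (WithTop ℤ))
  else if i = t.1 + 1 then (((t.2.1 + t.2.2 : ℤ) : WithTop ℤ) : WithBot (WithTop ℤ))
  else ⊤

/-- `c` is a decomposition of the table `u` as a positive rational combination of the
pure tables `T_{s,p,q}` (with `q ≥ 1`) whose degree sequences form a chain. -/
def IsChainDecomposition (u : ℤ → ℤ → ℚ) (c : ℤ × ℤ × ℤ → ℚ) : Prop :=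
  (Function.support c).Finite ∧
  (∀ t, c t ≠ 0 → 0 < c t ∧ 1 ≤ t.2.2) ∧
  (∀ t t', c t ≠ 0 → c t' ≠ 0 →
    (∀ i, cyclicDegSeq t i ≤ cyclicDegSeq t' i) ∨
      (∀ i, cyclicDegSeq t' i ≤ cyclicDegSeq t i)) ∧
  (∀ i j : ℤ, u i j = ∑ᶠ t : ℤ × ℤ × ℤ, c t * cyclicTable t i j)

/-!
Order the pure tables of a chain decomposition of `u` by their degree sequences and let
`T_{s,p,q}` be the least one. Every other table of the chain sits in homological degrees at most
`s, s + 1`, and where it shares a degree with `T_{s,p,q}` its entry lies no lower. Hence `s + 1` is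
the last homological degree in which `u` is nonzero, and `p`, `p + q` are the lowest degrees of
nonzero entries of `u` in homological degrees `s`, `s + 1`: the least table is read off from `u`
alone. Two chain decompositions therefore share their least table; subtracting the smaller of its
two coefficients from both leaves chain decompositions of one smaller table, with smaller total
support, and induction concludes.
-/

open Function

lemma cyclicTable_ne_zero {t : ℤ × ℤ × ℤ} {i j : ℤ} (h : cyclicTable t i j ≠ 0) :
    (i = t.1 ∧ j = t.2.1) ∨ (i = t.1 + 1 ∧ j = t.2.1 + t.2.2) := by
  unfold cyclicTable at h
  split_ifs at h with h₁ h₂ <;> simp_all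

lemma cyclicTable_nonneg (t : ℤ × ℤ × ℤ) (i j : ℤ) : 0 ≤ cyclicTable t i j := by
  unfold cyclicTable; positivity

lemma one_le_cyclicTable_fst_add_one (t : ℤ × ℤ × ℤ) :
    1 ≤ cyclicTable t (t.1 + 1) (t.2.1 + t.2.2) := by
  simp [cyclicTable]

lemma one_le_cyclicTable_fst (t : ℤ × ℤ × ℤ) : 1 ≤ cyclicTable t t.1 t.2.1 := by
  simp [cyclicTable]

lemma cyclicDegSeq_fst (t : ℤ × ℤ × ℤ) :
    cyclicDegSeq t t.1 = ((t.2.1 : WithTop ℤ) : WithBot (WithTop ℤ)) := by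
  simp [cyclicDegSeq]

lemma cyclicDegSeq_fst_add_one (t : ℤ × ℤ × ℤ) :
    cyclicDegSeq t (t.1 + 1) = (((t.2.1 + t.2.2 : ℤ) : WithTop ℤ) : WithBot (WithTop ℤ)) := by
  simp [cyclicDegSeq]

lemma cyclicDegSeq_eq_top_iff {t : ℤ × ℤ × ℤ} {i : ℤ} :
    cyclicDegSeq t i = ⊤ ↔ t.1 + 1 < i := by
  unfold cyclicDegSeq
  split_ifs <;> simp [-WithTop.coe_add, -WithBot.coe_add] <;> omega

lemma fst_le_of_cyclicDegSeq_le {t t' : ℤ × ℤ × ℤ} (h : cyclicDegSeq t ≤ cyclicDegSeq t') :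
    t'.1 ≤ t.1 := by
  have htop : cyclicDegSeq t (t.1 + 2) = ⊤ := cyclicDegSeq_eq_top_iff.mpr (by omega)
  have := cyclicDegSeq_eq_top_iff.mp (top_le_iff.mp (htop ▸ h (t.1 + 2)))
  omega

section

variable {ι M : Type*} [DecidableEq ι] [AddGroup M] {c : ι → M} {t : ι}

lemma support_sub_single_subset (ht : c t ≠ 0) (a : M) :
    support (c - Pi.single t a) ⊆ support c := by
  intro x hx
  by_cases h : x = t
  · exact h ▸ ht
  · simpa [h] using hx

lemma ncard_support_sub_single_self_lt (hc : (support c).Finite) (ht : c t ≠ 0) :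
    (support (c - Pi.single t (c t))).ncard < (support c).ncard :=
  Set.ncard_lt_ncard ((Set.ssubset_iff_of_subset (support_sub_single_subset ht _)).mpr
    ⟨t, ht, by simp⟩) hc

end

def IsLastCorner (u : ℤ → ℤ → ℚ) (t : ℤ × ℤ × ℤ) : Prop :=
  IsGreatest {i | ∃ j, u i j ≠ 0} (t.1 + 1) ∧ IsLeast {j | u t.1 j ≠ 0} t.2.1 ∧
    IsLeast {j | u (t.1 + 1) j ≠ 0} (t.2.1 + t.2.2)

lemma IsLastCorner.eq {u : ℤ → ℤ → ℚ} {t t' : ℤ × ℤ × ℤ} (h : IsLastCorner u t)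
    (h' : IsLastCorner u t') : t = t' := by
  obtain ⟨s, p, q⟩ := t
  obtain ⟨s', p', q'⟩ := t'
  obtain rfl : s = s' := by simpa using h.1.unique h'.1
  obtain rfl : p = p' := h.2.1.unique h'.2.1
  obtain rfl : q = q' := by simpa using h.2.2.unique h'.2.2
  rfl

namespace IsChainDecomposition

variable {u : ℤ → ℤ → ℚ} {c : ℤ × ℤ × ℤ → ℚ} {t : ℤ × ℤ × ℤ}

lemma nonneg (hc : IsChainDecomposition u c) (t : ℤ × ℤ × ℤ) : 0 ≤ c t := by
  by_cases ht : c t = 0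
  · exact ht.ge
  · exact (hc.2.1 t ht).1.le

lemma mul_cyclicTable_le (hc : IsChainDecomposition u c) (t : ℤ × ℤ × ℤ) (i j : ℤ) :
    c t * cyclicTable t i j ≤ u i j := by
  rw [hc.2.2.2 i j]
  exact single_le_finsum t (hc.1.subset (support_mul_subset_left _ _))
    fun t' => mul_nonneg (hc.nonneg t') (cyclicTable_nonneg t' i j)

lemma pos_of_one_le_cyclicTable (hc : IsChainDecomposition u c) (ht : c t ≠ 0) {i j : ℤ}
    (hT : 1 ≤ cyclicTable t i j) : 0 < u i j :=
  calc 0 < c t := (hc.2.1 t ht).1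
    _ ≤ c t * cyclicTable t i j := le_mul_of_one_le_right (hc.nonneg t) hT
    _ ≤ u i j := hc.mul_cyclicTable_le t i j

lemma exists_of_ne_zero (hc : IsChainDecomposition u c) {i j : ℤ} (h : u i j ≠ 0) :
    ∃ t, c t ≠ 0 ∧ ((i = t.1 ∧ j = t.2.1) ∨ (i = t.1 + 1 ∧ j = t.2.1 + t.2.2)) := by
  rw [hc.2.2.2 i j] at h
  obtain ⟨t, ht⟩ : ∃ t, c t * cyclicTable t i j ≠ 0 := by
    by_contra! hall
    exact h (finsum_eq_zero_of_forall_eq_zero hall)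
  exact ⟨t, left_ne_zero_of_mul ht, cyclicTable_ne_zero (right_ne_zero_of_mul ht)⟩

lemma eq_zero_iff (hc : IsChainDecomposition u c) : c = 0 ↔ u = 0 := by
  constructor
  · rintro rfl
    ext i j
    simp [hc.2.2.2]
  · rintro rfl
    by_contra! hne
    obtain ⟨t, ht⟩ := Function.ne_iff.mp hne
    exact (hc.pos_of_one_le_cyclicTable ht (one_le_cyclicTable_fst t)).ne rfl

lemma exists_least (hc : IsChainDecomposition u c) (hne : c ≠ 0) :
    ∃ t₀, c t₀ ≠ 0 ∧ ∀ t, c t ≠ 0 → cyclicDegSeq t₀ ≤ cyclicDegSeq t := by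
  obtain ⟨t₀, ht₀, hmin⟩ := hc.1.exists_minimalFor cyclicDegSeq _ (support_nonempty_iff.mpr hne)
  refine ⟨t₀, ht₀, fun t ht => ?_⟩
  rcases hc.2.2.1 t₀ t ht₀ ht with h | h
  · exact h
  · exact hmin ht h

lemma isLastCorner_of_least (hc : IsChainDecomposition u c) {t₀ : ℤ × ℤ × ℤ} (ht₀ : c t₀ ≠ 0)
    (hleast : ∀ t, c t ≠ 0 → cyclicDegSeq t₀ ≤ cyclicDegSeq t) : IsLastCorner u t₀ := by
  have hfst t (ht : c t ≠ 0) : t.1 ≤ t₀.1 := fst_le_of_cyclicDegSeq_le (hleast t ht)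
  have hu₁ := hc.pos_of_one_le_cyclicTable ht₀ (one_le_cyclicTable_fst t₀)
  have hu₂ := hc.pos_of_one_le_cyclicTable ht₀ (one_le_cyclicTable_fst_add_one t₀)
  refine ⟨⟨⟨_, hu₂.ne'⟩, ?_⟩, ⟨hu₁.ne', ?_⟩, ⟨hu₂.ne', ?_⟩⟩
  · rintro i ⟨j, hj⟩
    obtain ⟨t, ht, ⟨rfl, -⟩ | ⟨rfl, -⟩⟩ := hc.exists_of_ne_zero hj <;> linarith [hfst t ht]
  · intro j hj
    obtain ⟨t, ht, ⟨hi, rfl⟩ | ⟨hi, rfl⟩⟩ := hc.exists_of_ne_zero hj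
    · have := hleast t ht t₀.1
      rw [cyclicDegSeq_fst, hi, cyclicDegSeq_fst] at this
      exact WithTop.coe_le_coe.mp (WithBot.coe_le_coe.mp this)
    · have := hleast t ht t₀.1
      rw [cyclicDegSeq_fst, hi, cyclicDegSeq_fst_add_one] at this
      exact WithTop.coe_le_coe.mp (WithBot.coe_le_coe.mp this)
  · intro j hj
    obtain ⟨t, ht, ⟨hi, rfl⟩ | ⟨hi, rfl⟩⟩ := hc.exists_of_ne_zero hj
    · linarith [hfst t ht]
    · have := hleast t ht (t₀.1 + 1)
      rw [cyclicDegSeq_fst_add_one, hi, cyclicDegSeq_fst_add_one] at this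
      exact WithTop.coe_le_coe.mp (WithBot.coe_le_coe.mp this)

lemma sub_single (hc : IsChainDecomposition u c) (ht : c t ≠ 0) {a : ℚ} (ha : a ≤ c t) :
    IsChainDecomposition (u - a • cyclicTable t) (c - Pi.single t a) := by
  have hsupp := support_sub_single_subset ht a
  refine ⟨hc.1.subset hsupp, fun t' ht' => ⟨?_, (hc.2.1 t' (hsupp ht')).2⟩,
    fun t₁ t₂ h₁ h₂ => hc.2.2.1 t₁ t₂ (hsupp h₁) (hsupp h₂), fun i j => ?_⟩
  · by_cases h : t' = t
    · subst h
      simp only [Pi.sub_apply, Pi.single_eq_same] at ht' ⊢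
      exact lt_of_le_of_ne (sub_nonneg.mpr ha) (Ne.symm ht')
    · simpa [h] using (hc.2.1 t' (hsupp ht')).1
  · have hfin :
        (support fun t' => (Pi.single t a : ℤ × ℤ × ℤ → ℚ) t' * cyclicTable t' i j).Finite :=
      (Set.finite_singleton t).subset
        ((support_mul_subset_left (Pi.single t a) _).trans Pi.support_single_subset)
    simp only [Pi.sub_apply, Pi.smul_apply, smul_eq_mul, sub_mul]
    rw [finsum_sub_distrib (hc.1.subset (support_mul_subset_left _ _)) hfin, ← hc.2.2.2 i j,
      finsum_eq_single _ t fun x hx => by simp [hx]]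
    simp

theorem unique {u : ℤ → ℤ → ℚ} {c c' : ℤ × ℤ × ℤ → ℚ} (hc : IsChainDecomposition u c)
    (hc' : IsChainDecomposition u c') : c = c' := by
  by_cases h0 : c = 0
  · rw [h0, eq_comm, hc'.eq_zero_iff, ← hc.eq_zero_iff, h0]
  have h0' : c' ≠ 0 := by rwa [Ne, hc'.eq_zero_iff, ← hc.eq_zero_iff]
  obtain ⟨t₀, ht₀, hleast⟩ := hc.exists_least h0
  obtain ⟨t₀', ht₀', hleast'⟩ := hc'.exists_least h0'
  obtain rfl : t₀ = t₀' :=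
    (hc.isLastCorner_of_least ht₀ hleast).eq (hc'.isLastCorner_of_least ht₀' hleast')
  obtain ⟨a, hac, hac', hmin⟩ : ∃ a, a ≤ c t₀ ∧ a ≤ c' t₀ ∧ (a = c t₀ ∨ a = c' t₀) :=
    ⟨_, min_le_left _ _, min_le_right _ _, min_choice _ _⟩
  have hlt : (support (c - Pi.single t₀ a)).ncard + (support (c' - Pi.single t₀ a)).ncard <
      (support c).ncard + (support c').ncard := by
    have hle := Set.ncard_le_ncard (support_sub_single_subset ht₀ a) hc.1
    have hle' := Set.ncard_le_ncard (support_sub_single_subset ht₀' a) hc'.1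
    rcases hmin with rfl | rfl
    · linarith [ncard_support_sub_single_self_lt hc.1 ht₀]
    · linarith [ncard_support_sub_single_self_lt hc'.1 ht₀']
  have hsub : c - Pi.single t₀ a = c' - Pi.single t₀ a :=
    (hc.sub_single ht₀ hac).unique (hc'.sub_single ht₀' hac')
  exact sub_left_injective hsub
termination_by (support c).ncard + (support c').ncard
decreasing_by exact hlt

end IsChainDecomposition

theorem chain_decomposition_unique_general (u : ℤ → ℤ → ℚ)
    (c c' : ℤ × ℤ × ℤ → ℚ)
    (hc : IsChainDecomposition u c) (hc' : IsChainDecomposition u c') : c = c' :=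
  hc.unique hc'

/-- **Uniqueness of the chain decomposition over `A = k[t]`.** If `u` lies in the cone
of Betti tables of bounded free complexes with torsion homology (entries nonnegative,
finitely supported, all `χ_{i,j}(u) ≥ 0`, total Euler characteristic zero), then any two
decompositions of `u` as positive rational combinations of pure two-entry tables whose
degree sequences form a chain coincide. -/
theorem chain_decomposition_unique (u : ℤ → ℤ → ℚ)
    (hpos : ∀ i j, 0 ≤ u i j)
    (hfin : (Function.support fun x : ℤ × ℤ => u x.1 x.2).Finite)
    (hchi : ∀ i j : ℤ, 0 ≤ chiFunctional u i j)
    (heuler : ∑ᶠ a : ℤ, (-1 : ℚ) ^ a * ∑ᶠ b : ℤ, u a b = 0)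
    (c c' : ℤ × ℤ × ℤ → ℚ)
    (hc : IsChainDecomposition u c) (hc' : IsChainDecomposition u c') : c = c' :=
  chain_decomposition_unique_general u c c' hc hc'
end
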